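/- arXiv:2506.14227 — 11 statements merged into one kernel-verified Lean document; each statement's English description precedes it below -/
import Mathlib

section
/- Let Φ : (0,∞) → ℝ have the Thomas–Fermi potential properties. Then the function κ : [0,∞) → ℝ, κ(λ) = (1/π) ∫₀^∞ (Φ(r) − λ²r⁻²)₊^{1/2} dr, is continuous on [0,∞). -/
open MeasureTheory Real Filter Set

/-- The semiclassical grand canonical energy
`e_G(λ,μ) = −(2/(3π)) ∫₀^∞ (Φ(r) − λ²r⁻² − μ)₊^{3/2} dr`. -/
noncomputable def eG (Φ : ℝ → ℝ) (lam μ : ℝ) : ℝ :=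
  -(2 / (3 * π)) * ∫ r in Ioi (0:ℝ), (max (Φ r - lam ^ 2 / r ^ 2 - μ) 0) ^ ((3:ℝ)/2)

/-- The semiclassical counting function
`n(λ,μ) = (1/π) ∫₀^∞ (Φ(r) − λ²r⁻² − μ)₊^{1/2} dr`. -/
noncomputable def nSC (Φ : ℝ → ℝ) (lam μ : ℝ) : ℝ :=
  (1 / π) * ∫ r in Ioi (0:ℝ), (max (Φ r - lam ^ 2 / r ^ 2 - μ) 0) ^ ((1:ℝ)/2)

/-- `Φ` has the Thomas–Fermi potential properties: continuous and positive on `(0,∞)`,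
`r·Φ(r) → 1` as `r → 0+`, and `Φ(r) ≤ C r⁻⁴` for `r ≥ 1`. -/
def HasTF (Φ : ℝ → ℝ) : Prop :=
  ContinuousOn Φ (Ioi 0) ∧ (∀ r, 0 < r → 0 < Φ r) ∧
  Tendsto (fun r => r * Φ r) (nhdsWithin 0 (Ioi 0)) (nhds 1) ∧
  ∃ C, 0 < C ∧ ∀ r, 1 ≤ r → Φ r ≤ C / r ^ 4

lemma cont_half : Continuous fun x : ℝ => x ^ ((1:ℝ)/2) := by
  rw [continuous_iff_continuousAt]
  intro x
  exact Real.continuousAt_rpow_const x _ (Or.inr (by norm_num))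

/-- For a Thomas–Fermi potential `Φ`, the angular momentum distribution
`κ(λ) = n(λ,0)` is continuous on `[0,∞)`. -/
theorem kappa_continuous (Φ : ℝ → ℝ) (hΦ : HasTF Φ) :
    ContinuousOn (fun lam => nSC Φ lam 0) (Ici 0) := by
  obtain ⟨hcont, hpos, hlim, C, hC, hCbd⟩ := hΦ
  -- small radius bound
  have h2 : ∀ᶠ r in nhdsWithin 0 (Ioi 0), r * Φ r < 2 :=
    hlim.eventually (eventually_lt_nhds (by norm_num))
  obtain ⟨δ, hδmem, hδ⟩ := mem_nhdsGT_iff_exists_Ioo_subset.1 h2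
  set δ' : ℝ := min δ 1 with hδ'def
  have hδ'0 : 0 < δ' := lt_min hδmem one_pos
  have hδ'1 : δ' ≤ 1 := min_le_right _ _
  -- the dominating function
  set g : ℝ → ℝ := fun r => (max (Φ r) 0) ^ ((1:ℝ)/2) with hg
  have hΦm : AEMeasurable Φ (volume.restrict (Ioi 0)) :=
    hcont.aemeasurable measurableSet_Ioi
  have hgm : AEStronglyMeasurable g (volume.restrict (Ioi 0)) :=
    (cont_half.measurable.comp_aemeasurable (hΦm.max aemeasurable_const)).aestronglyMeasurable
  have hgnn : ∀ r, 0 ≤ g r := fun r => Real.rpow_nonneg (le_max_right _ _) _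
  -- integrability near 0
  have hg1 : IntegrableOn g (Ioo 0 δ') := by
    have hbd : IntegrableOn (fun r : ℝ => 2 * r ^ (-((1:ℝ)/2))) (Ioo 0 δ') := by
      have h' : IntegrableOn (fun x : ℝ => x ^ (-((1:ℝ)/2))) (Ioo 0 δ') := by
        refine IntegrableOn.mono_set ?_ Ioo_subset_Ioc_self
        simpa [uIoc_of_le hδ'0.le] using
          (intervalIntegral.intervalIntegrable_rpow'
            (a := 0) (b := δ') (r := -((1:ℝ)/2)) (by norm_num)).1
      exact h'.const_mul 2
    refine Integrable.mono' hbd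
      (hgm.mono_measure (Measure.restrict_mono Ioo_subset_Ioi_self le_rfl)) ?_
    rw [ae_restrict_iff' measurableSet_Ioo]
    refine Eventually.of_forall fun r hr => ?_
    have hr0 : 0 < r := hr.1
    have hrδ : r ∈ Ioo 0 δ := ⟨hr0, lt_of_lt_of_le hr.2 (min_le_left _ _)⟩
    have hΦr : Φ r < 2 / r := by
      rw [lt_div_iff₀ hr0, mul_comm]
      exact hδ hrδ
    have h1 : max (Φ r) 0 ≤ 2 / r := max_le hΦr.le (by positivity)
    have h2' : g r ≤ (2 / r) ^ ((1:ℝ)/2) :=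
      Real.rpow_le_rpow (le_max_right _ _) h1 (by norm_num)
    have h3 : (2 / r) ^ ((1:ℝ)/2) = 2 ^ ((1:ℝ)/2) * r ^ (-((1:ℝ)/2)) := by
      rw [Real.div_rpow (by norm_num) hr0.le, Real.rpow_neg hr0.le, div_eq_mul_inv]
    have h4 : (2:ℝ) ^ ((1:ℝ)/2) ≤ 2 := by
      calc (2:ℝ) ^ ((1:ℝ)/2) ≤ 2 ^ (1:ℝ) :=
            Real.rpow_le_rpow_of_exponent_le (by norm_num) (by norm_num)
        _ = 2 := Real.rpow_one 2
    rw [Real.norm_of_nonneg (hgnn r)]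
    calc g r ≤ (2 / r) ^ ((1:ℝ)/2) := h2'
      _ = 2 ^ ((1:ℝ)/2) * r ^ (-((1:ℝ)/2)) := h3
      _ ≤ 2 * r ^ (-((1:ℝ)/2)) :=
          mul_le_mul_of_nonneg_right h4 (Real.rpow_nonneg hr0.le _)
  -- integrability in the middle
  have hg2 : IntegrableOn g (Icc δ' 1) := by
    have hsub : Icc δ' 1 ⊆ Ioi 0 := fun x hx => lt_of_lt_of_le hδ'0 hx.1
    have hgc : ContinuousOn g (Icc δ' 1) := by
      exact cont_half.comp_continuousOn ((hcont.mono hsub).sup continuousOn_const)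
    exact hgc.integrableOn_compact isCompact_Icc
  -- integrability at infinity
  have hg3 : IntegrableOn g (Ioi 1) := by
    have hbd : IntegrableOn (fun r : ℝ => C ^ ((1:ℝ)/2) * r ^ (-2:ℝ)) (Ioi 1) :=
      (integrableOn_Ioi_rpow_of_lt (by norm_num) one_pos).const_mul _
    refine Integrable.mono' hbd
      (hgm.mono_measure (Measure.restrict_mono (Ioi_subset_Ioi one_pos.le) le_rfl)) ?_
    rw [ae_restrict_iff' measurableSet_Ioi]
    refine Eventually.of_forall fun r hr => ?_
    have hr1 : (1:ℝ) ≤ r := le_of_lt hr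
    have hr0 : (0:ℝ) < r := lt_of_lt_of_le one_pos hr1
    have h1 : max (Φ r) 0 ≤ C / r ^ 4 := max_le (hCbd r hr1) (by positivity)
    have h2' : g r ≤ (C / r ^ 4) ^ ((1:ℝ)/2) :=
      Real.rpow_le_rpow (le_max_right _ _) h1 (by norm_num)
    have h3 : (C / r ^ 4) ^ ((1:ℝ)/2) = C ^ ((1:ℝ)/2) * r ^ (-2:ℝ) := by
      rw [Real.div_rpow hC.le (by positivity), div_eq_mul_inv, ← Real.rpow_natCast r 4,
        ← Real.rpow_mul hr0.le, ← Real.rpow_neg hr0.le]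
      norm_num
    rw [Real.norm_of_nonneg (hgnn r)]
    exact le_of_le_of_eq h2' h3
  -- total integrability
  have hgInt : IntegrableOn g (Ioi 0) := by
    have hsub : Ioi (0:ℝ) ⊆ Ioo 0 δ' ∪ (Icc δ' 1 ∪ Ioi 1) := by
      intro r hr
      rcases lt_or_ge r δ' with h | h
      · exact Or.inl ⟨hr, h⟩
      rcases le_or_gt r 1 with h' | h'
      · exact Or.inr (Or.inl ⟨h, h'⟩)
      · exact Or.inr (Or.inr h')
    exact (hg1.union (hg2.union hg3)).mono_set hsub
  -- dominated convergence
  have key : Continuous fun lam : ℝ =>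
      ∫ r in Ioi (0:ℝ), (max (Φ r - lam ^ 2 / r ^ 2 - 0) 0) ^ ((1:ℝ)/2) := by
    rw [continuous_iff_continuousAt]
    intro lam₀
    apply continuousAt_of_dominated (bound := g)
    · refine Eventually.of_forall fun lam => ?_
      have hm : AEMeasurable (fun r : ℝ => Φ r - lam ^ 2 / r ^ 2 - 0)
          (volume.restrict (Ioi 0)) := by
        exact ((hΦm.sub ((measurable_const.div (measurable_id.pow_const 2)).aemeasurable)).sub
          aemeasurable_const)
      exact (cont_half.measurable.comp_aemeasurable (hm.max aemeasurable_const)).aestronglyMeasurable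
    · refine Eventually.of_forall fun lam => ?_
      rw [ae_restrict_iff' measurableSet_Ioi]
      refine Eventually.of_forall fun r hr => ?_
      have hr0 : (0:ℝ) < r := hr
      have h1 : Φ r - lam ^ 2 / r ^ 2 - 0 ≤ Φ r := by
        have : 0 ≤ lam ^ 2 / r ^ 2 := by positivity
        linarith
      have h2' : max (Φ r - lam ^ 2 / r ^ 2 - 0) 0 ≤ max (Φ r) 0 :=
        max_le_max h1 le_rfl
      rw [Real.norm_of_nonneg (Real.rpow_nonneg (le_max_right _ _) _)]
      exact Real.rpow_le_rpow (le_max_right _ _) h2' (by norm_num)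
    · exact hgInt
    · filter_upwards [ae_restrict_mem measurableSet_Ioi] with r hr
      have hr0 : (0:ℝ) < r := hr
      have hc : Continuous fun lam : ℝ => Φ r - lam ^ 2 / r ^ 2 - 0 :=
        (continuous_const.sub ((continuous_pow 2).div_const _)).sub continuous_const
      exact (cont_half.comp (hc.max continuous_const)).continuousAt
  have : Continuous fun lam : ℝ => nSC Φ lam 0 := by
    simp only [nSC]
    exact continuous_const.mul key
  exact this.continuousOn
end

section
/- Let Φ : (0,∞) → ℝ have the Thomas–Fermi potential properties. Then S := sup_{r>0} r²·Φ(r) is finite, the function κ is uniformly bounded on [0,∞), and κ(λ) = 0 for every λ ≥ 0 with λ² ≥ S. In particular κ is a bounded function with compact support. -/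
/-!
Near the origin `r Φ(r)` tends to `1`, so together with continuity it is bounded on `(0, 1]`,
say by `A`; beyond `1` we have `Φ(r) ≤ C r⁻⁴`. Hence `r² Φ(r) ≤ max A C` on `(0, ∞)`, and
`√Φ` is dominated by `√A r^{-1/2}` on `(0, 1]` and by `√C r⁻²` on `(1, ∞)`, so it is integrable.
Since the integrand of `κ(λ)` decreases in `λ`, every `κ(λ)` lies between `0` and `κ(0) < ∞`.
If `λ² ≥ S` then `Φ(r) ≤ λ² r⁻²` for all `r > 0`, so the integrand of `κ(λ)` vanishes.
-/

open MeasureTheory Real Filter Set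

open Topology

lemma bddAbove_image_Ioc_of_tendsto_nhdsGT {f : ℝ → ℝ} {a b l : ℝ}
    (hf : ContinuousOn f (Ioc a b)) (hlim : Tendsto f (𝓝[>] a) (𝓝 l)) :
    BddAbove (f '' Ioc a b) := by
  obtain ⟨c, hac, hc⟩ :=
    (nhdsGT_basis a).eventually_iff.mp (hlim.eventually_lt_const (lt_add_one l))
  have hsplit : Ioc a b ⊆ Ioo a c ∪ Icc c b := fun r hr =>
    (lt_or_ge r c).imp (fun h => ⟨hr.1, h⟩) (fun h => ⟨h, hr.2⟩)
  have hnear : BddAbove (f '' Ioo a c) :=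
    ⟨l + 1, by rintro _ ⟨r, hr, rfl⟩; exact (hc hr).le⟩
  have hfar : BddAbove (f '' Icc c b) :=
    isCompact_Icc.bddAbove_image (hf.mono fun r hr => ⟨hac.trans_le hr.1, hr.2⟩)
  exact ((image_union f _ _).symm ▸ hnear.union hfar).mono (image_mono hsplit)

lemma integrableOn_max_zero_rpow_of_le_mul_rpow {f : ℝ → ℝ} {s : Set ℝ} {c p q : ℝ}
    (hs : MeasurableSet s) (hs0 : s ⊆ Ioi 0) (hc : 0 ≤ c) (hq : 0 ≤ q)
    (hf : ContinuousOn f s) (hint : IntegrableOn (fun r => r ^ (p * q)) s)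
    (hle : ∀ r ∈ s, f r ≤ c * r ^ p) :
    IntegrableOn (fun r => (max (f r) 0) ^ q) s := by
  refine (hint.const_mul (c ^ q)).mono'
    (((hf.sup continuousOn_const).rpow_const fun _ _ => Or.inr hq).aestronglyMeasurable hs)
    (ae_restrict_of_forall_mem hs fun r hrs => ?_)
  have hr : 0 ≤ r := (hs0 hrs).le
  rw [norm_of_nonneg (rpow_nonneg (le_max_right _ _) _), rpow_mul hr,
    ← mul_rpow hc (rpow_nonneg hr _)]
  exact rpow_le_rpow (le_max_right _ _)
    (max_le (hle r hrs) (mul_nonneg hc (rpow_nonneg hr _))) hq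

section SemiclassicalCounting

variable {Φ : ℝ → ℝ}

lemma nSC_nonneg (lam μ : ℝ) : 0 ≤ nSC Φ lam μ :=
  mul_nonneg (by positivity)
    (setIntegral_nonneg measurableSet_Ioi fun _ _ => rpow_nonneg (le_max_right _ _) _)

lemma nSC_le_nSC_zero {μ : ℝ} (lam : ℝ)
    (hint : IntegrableOn (fun r => (max (Φ r - μ) 0) ^ ((1:ℝ)/2)) (Ioi 0)) :
    nSC Φ lam μ ≤ nSC Φ 0 μ := by
  refine mul_le_mul_of_nonneg_left ?_ (by positivity)
  refine integral_mono_of_nonneg (ae_of_all _ fun _ => rpow_nonneg (le_max_right _ _) _)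
    (by simpa [IntegrableOn] using hint) (ae_of_all _ fun r => ?_)
  refine rpow_le_rpow (le_max_right _ _) (max_le_max_right _ ?_) (by norm_num)
  simpa using (by positivity : 0 ≤ lam ^ 2 / r ^ 2)

lemma nSC_eq_zero_of_sq_mul_le {lam μ : ℝ} (hμ : 0 ≤ μ)
    (h : ∀ r, 0 < r → r ^ 2 * Φ r ≤ lam ^ 2) : nSC Φ lam μ = 0 := by
  have hzero : EqOn (fun r => (max (Φ r - lam ^ 2 / r ^ 2 - μ) 0) ^ ((1:ℝ)/2)) 0 (Ioi 0) := by
    intro r (hr : 0 < r)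
    have : Φ r ≤ lam ^ 2 / r ^ 2 := by
      rw [le_div_iff₀ (by positivity), mul_comm]
      exact h r hr
    dsimp only
    rw [max_eq_right (by linarith), Pi.zero_apply, zero_rpow (by norm_num)]
  rw [nSC, setIntegral_congr_fun measurableSet_Ioi hzero]
  simp

end SemiclassicalCounting

namespace HasTF

variable {Φ : ℝ → ℝ}

lemma exists_mul_le (hΦ : HasTF Φ) : ∃ A, ∀ r ∈ Ioc (0:ℝ) 1, r * Φ r ≤ A := by
  obtain ⟨hcont, -, hlim, -⟩ := hΦ
  obtain ⟨A, hA⟩ := bddAbove_image_Ioc_of_tendsto_nhdsGT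
    ((continuousOn_id.mul hcont).mono Ioc_subset_Ioi_self) hlim
  exact ⟨A, fun r hr => hA (mem_image_of_mem _ hr)⟩

lemma bddAbove_sq_mul (hΦ : HasTF Φ) : BddAbove ((fun r => r ^ 2 * Φ r) '' Ioi 0) := by
  obtain ⟨A, hA⟩ := hΦ.exists_mul_le
  obtain ⟨-, hpos, -, C, -, hC⟩ := hΦ
  refine ⟨max A C, ?_⟩
  rintro _ ⟨r, hr : 0 < r, rfl⟩
  rcases le_or_gt r 1 with hr1 | hr1
  · calc r ^ 2 * Φ r = r * (r * Φ r) := by ring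
      _ ≤ r * Φ r := mul_le_of_le_one_left (mul_pos hr (hpos r hr)).le hr1
      _ ≤ max A C := (hA r ⟨hr, hr1⟩).trans (le_max_left A C)
  · calc r ^ 2 * Φ r ≤ r ^ 4 * Φ r := by
          gcongr
          · exact (hpos r hr).le
          · exact hr1.le
          · norm_num
      _ ≤ C := by
          rw [mul_comm, ← le_div_iff₀ (by positivity)]
          exact hC r hr1.le
      _ ≤ max A C := le_max_right A C

lemma integrableOn_max_zero_rpow_half (hΦ : HasTF Φ) :
    IntegrableOn (fun r => (max (Φ r) 0) ^ ((1:ℝ)/2)) (Ioi 0) := by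
  obtain ⟨A, hA⟩ := hΦ.exists_mul_le
  obtain ⟨hcont, hpos, -, C, hC0, hC⟩ := hΦ
  have hA0 : 0 ≤ A := (mul_pos one_pos (hpos 1 one_pos)).le.trans (hA 1 ⟨one_pos, le_rfl⟩)
  have hnear : IntegrableOn (fun r => (max (Φ r) 0) ^ ((1:ℝ)/2)) (Ioc 0 1) := by
    refine integrableOn_max_zero_rpow_of_le_mul_rpow (p := -1) measurableSet_Ioc
      Ioc_subset_Ioi_self hA0 (by norm_num) (hcont.mono Ioc_subset_Ioi_self)
      (intervalIntegral.intervalIntegrable_rpow' (by norm_num)).1 fun r hr => ?_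
    rw [rpow_neg_one, ← div_eq_mul_inv, le_div_iff₀ hr.1, mul_comm]
    exact hA r hr
  have hfar : IntegrableOn (fun r => (max (Φ r) 0) ^ ((1:ℝ)/2)) (Ioi 1) := by
    refine integrableOn_max_zero_rpow_of_le_mul_rpow (p := -4) measurableSet_Ioi
      (Ioi_subset_Ioi zero_le_one) hC0.le (by norm_num) (hcont.mono (Ioi_subset_Ioi zero_le_one))
      (integrableOn_Ioi_rpow_of_lt (by norm_num) one_pos) fun r (hr : 1 < r) => ?_
    rw [rpow_neg (zero_le_one.trans hr.le), ← div_eq_mul_inv, rpow_ofNat]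
    exact hC r hr.le
  simpa only [Ioc_union_Ioi_eq_Ioi zero_le_one] using hnear.union hfar

end HasTF

/-- For a Thomas–Fermi potential `Φ`, `S = sup_{r>0} r²Φ(r)` is finite,
`κ = n(·,0)` is uniformly bounded on `[0,∞)`, and `κ(λ) = 0` whenever `λ² ≥ S`;
so `κ` is bounded with compact support. -/
theorem kappa_bounded_compact_support (Φ : ℝ → ℝ) (hΦ : HasTF Φ) :
    BddAbove ((fun r => r ^ 2 * Φ r) '' Ioi 0) ∧
    (∃ M : ℝ, ∀ lam, 0 ≤ lam → |nSC Φ lam 0| ≤ M) ∧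
    (∀ lam, 0 ≤ lam → sSup ((fun r => r ^ 2 * Φ r) '' Ioi 0) ≤ lam ^ 2 →
      nSC Φ lam 0 = 0) := by
  have hS := hΦ.bddAbove_sq_mul
  refine ⟨hS, ⟨nSC Φ 0 0, fun lam _ => ?_⟩, fun lam _ hlam => ?_⟩
  · rw [abs_of_nonneg (nSC_nonneg lam 0)]
    exact nSC_le_nSC_zero lam (by simpa using hΦ.integrableOn_max_zero_rpow_half)
  · exact nSC_eq_zero_of_sq_mul_le le_rfl fun r hr =>
      (le_csSup hS (mem_image_of_mem _ hr)).trans hlam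
end

section
/- Let Φ : (0,∞) → [0,∞) be measurable. Then, as an identity in the extended nonnegative reals, ∫₀^∞ 4λ · ( (1/π) ∫₀^∞ (Φ(r) − λ²r⁻²)₊^{1/2} dr ) dλ = (4/(3π)) ∫₀^∞ r² Φ(r)^{3/2} dr. In particular, if (1/(3π²)) ∫₀^∞ 4π r² Φ(r)^{3/2} dr = 1 (the Thomas–Fermi normalization ∫_{ℝ³} Φ^{3/2}/(3π²) dx = 1), then ∫₀^∞ 4λ κ(λ) dλ = 1, where κ(λ) = (1/π) ∫₀^∞ (Φ(r) − λ²r⁻²)₊^{1/2} dr. -/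
open MeasureTheory Real Filter Set

/-!
By Tonelli the `λ`- and `r`-integrals may be swapped. For fixed `r > 0` and `a ≥ 0` the
substitution `s = λ² / r²` gives
`∫₀^∞ 2λ (a - λ²/r²)₊^p dλ = r² ∫₀^∞ (a - s)₊^p ds = r² a^(p+1) / (p+1)`,
and with `p = 1/2` the constants combine to `(2/π) · (2/3) = 4/(3π)`.
-/

theorem lintegral_rpow_posPart_sub_Ioi {a p : ℝ} (ha : 0 ≤ a) (hp : 0 < p) :
    ∫⁻ s in Ioi 0, ENNReal.ofReal (max (a - s) 0 ^ p)
      = ENNReal.ofReal (a ^ (p + 1) / (p + 1)) := by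
  have hzero : ∫⁻ s in Ioi a, ENNReal.ofReal (max (a - s) 0 ^ p) = 0 := by
    refine (setLIntegral_congr_fun measurableSet_Ioi fun s hs => ?_).trans lintegral_zero
    rw [max_eq_right (sub_nonpos.2 (le_of_lt hs)), zero_rpow hp.ne', ENNReal.ofReal_zero]
  have hcont : Continuous fun s => max (a - s) 0 ^ p := by fun_prop (disch := exact hp.le)
  rw [← Ioc_union_Ioi_eq_Ioi ha, lintegral_union measurableSet_Ioi Ioc_disjoint_Ioi_same, hzero,
    add_zero, ← ofReal_integral_eq_lintegral_ofReal
      (hcont.integrableOn_Icc.mono_set Ioc_subset_Icc_self)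
      (Eventually.of_forall fun _ => rpow_nonneg (le_max_right _ _) _),
    ← intervalIntegral.integral_of_le ha]
  congr 1
  calc ∫ s in (0)..a, max (a - s) 0 ^ p = ∫ s in (0)..a, (a - s) ^ p :=
        intervalIntegral.integral_congr fun s hs => by
          rw [uIcc_of_le ha] at hs
          rw [max_eq_left (sub_nonneg.2 hs.2)]
    _ = a ^ (p + 1) / (p + 1) := by
        rw [intervalIntegral.integral_comp_sub_left (fun x => x ^ p), sub_self, sub_zero,
          integral_rpow (Or.inl (by linarith)), zero_rpow (by linarith), sub_zero]

theorem image_sq_div_sq_Ioi {r : ℝ} (hr : r ≠ 0) :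
    (fun x : ℝ => x ^ 2 / r ^ 2) '' Ioi 0 = Ioi 0 := by
  ext y
  refine ⟨?_, fun hy => ⟨|r| * √y, mul_pos (abs_pos.2 hr) (sqrt_pos.2 hy), ?_⟩⟩
  · rintro ⟨x, hx, rfl⟩
    exact div_pos (pow_pos (mem_Ioi.1 hx) 2) (by positivity)
  · have := sq_sqrt (le_of_lt (mem_Ioi.1 hy))
    field_simp
    rw [sq_abs, this]

theorem lintegral_mul_rpow_posPart_sub_sq_div_sq {r a p : ℝ} (hr : r ≠ 0) (ha : 0 ≤ a)
    (hp : 0 < p) :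
    ∫⁻ x in Ioi 0, ENNReal.ofReal (2 * x) * ENNReal.ofReal (max (a - x ^ 2 / r ^ 2) 0 ^ p)
      = ENNReal.ofReal (r ^ 2 * (a ^ (p + 1) / (p + 1))) := by
  have hderiv : ∀ x ∈ Ioi (0 : ℝ), HasDerivWithinAt (fun x => x ^ 2 / r ^ 2) (2 * x / r ^ 2)
      (Ioi 0) x := fun x _ => by
    simpa using ((hasDerivAt_pow 2 x).div_const (r ^ 2)).hasDerivWithinAt
  have hmono : MonotoneOn (fun x : ℝ => x ^ 2 / r ^ 2) (Ioi 0) := fun x hx y _ hxy =>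
    div_le_div_of_nonneg_right (pow_le_pow_left₀ (le_of_lt hx) hxy 2) (sq_nonneg r)
  have hsubst := lintegral_image_eq_lintegral_deriv_mul_of_monotoneOn measurableSet_Ioi hderiv
    hmono fun s => ENNReal.ofReal (r ^ 2) * ENNReal.ofReal (max (a - s) 0 ^ p)
  rw [image_sq_div_sq_Ioi hr, lintegral_const_mul' _ _ ENNReal.ofReal_ne_top,
    lintegral_rpow_posPart_sub_Ioi ha hp] at hsubst
  rw [ENNReal.ofReal_mul (sq_nonneg r), hsubst]
  refine setLIntegral_congr_fun measurableSet_Ioi fun x hx => ?_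
  have hjac : 0 ≤ 2 * x / r ^ 2 := by have := mem_Ioi.1 hx; positivity
  rw [← mul_assoc, ← ENNReal.ofReal_mul hjac, div_mul_cancel₀ _ (pow_ne_zero 2 hr)]

theorem lintegral_mul_lintegral_rpow_posPart_sub_sq_div_sq {Φ : ℝ → ℝ} (hm : Measurable Φ)
    (h0 : ∀ r, 0 < r → 0 ≤ Φ r) {p : ℝ} (hp : 0 < p) :
    ∫⁻ x in Ioi 0, ENNReal.ofReal (2 * x) *
        ∫⁻ r in Ioi 0, ENNReal.ofReal (max (Φ r - x ^ 2 / r ^ 2) 0 ^ p)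
      = ∫⁻ r in Ioi 0, ENNReal.ofReal (r ^ 2 * (Φ r ^ (p + 1) / (p + 1))) := by
  simp_rw [← lintegral_const_mul' _ _ ENNReal.ofReal_ne_top]
  rw [lintegral_lintegral_swap (by fun_prop)]
  exact setLIntegral_congr_fun measurableSet_Ioi fun r hr =>
    lintegral_mul_rpow_posPart_sub_sq_div_sq (ne_of_gt hr) (h0 r hr) hp

theorem lintegral_mul_kappa_eq {Φ : ℝ → ℝ} (hm : Measurable Φ)
    (h0 : ∀ r, 0 < r → 0 ≤ Φ r) :
    ∫⁻ lam in Ioi (0:ℝ), ENNReal.ofReal (4 * lam) *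
        (ENNReal.ofReal (1 / π) *
          ∫⁻ r in Ioi (0:ℝ), ENNReal.ofReal ((max (Φ r - lam ^ 2 / r ^ 2) 0) ^ ((1:ℝ)/2)))
      = ENNReal.ofReal (4 / (3 * π)) *
          ∫⁻ r in Ioi (0:ℝ), ENNReal.ofReal (r ^ 2 * (Φ r) ^ ((3:ℝ)/2)) := by
  have hpi := pi_pos
  calc _ = ∫⁻ lam in Ioi (0:ℝ), ENNReal.ofReal (2 / π) * (ENNReal.ofReal (2 * lam) *
        ∫⁻ r in Ioi (0:ℝ),
          ENNReal.ofReal ((max (Φ r - lam ^ 2 / r ^ 2) 0) ^ ((1:ℝ)/2))) := by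
        refine lintegral_congr fun lam => ?_
        rw [← mul_assoc, ← mul_assoc, ← ENNReal.ofReal_mul' (by positivity),
          ← ENNReal.ofReal_mul (by positivity)]
        ring_nf
    _ = ENNReal.ofReal (2 / π) * ∫⁻ r in Ioi (0:ℝ),
          ENNReal.ofReal (2 / 3) * ENNReal.ofReal (r ^ 2 * (Φ r) ^ ((3:ℝ)/2)) := by
        rw [lintegral_const_mul' _ _ ENNReal.ofReal_ne_top,
          lintegral_mul_lintegral_rpow_posPart_sub_sq_div_sq hm h0 (p := 1 / 2) (by norm_num)]
        refine congrArg _ (lintegral_congr fun r => ?_)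
        rw [← ENNReal.ofReal_mul (p := 2 / 3) (by norm_num)]
        congr 1
        norm_num
        ring
    _ = _ := by
        rw [lintegral_const_mul' _ _ ENNReal.ofReal_ne_top, ← mul_assoc,
          ← ENNReal.ofReal_mul (by positivity)]
        congr 2
        field_simp
        ring

/-- For a measurable nonnegative `Φ` on `(0,∞)`, as an identity in `ℝ≥0∞`,
`∫₀^∞ 4λ ((1/π) ∫₀^∞ (Φ(r) − λ²r⁻²)₊^{1/2} dr) dλ = (4/(3π)) ∫₀^∞ r² Φ(r)^{3/2} dr`;
in particular, the Thomas–Fermi normalization implies `∫₀^∞ 4λ κ(λ) dλ = 1`. -/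
theorem lintegral_kappa_eq (Φ : ℝ → ℝ) (hm : Measurable Φ) (h0 : ∀ r, 0 < r → 0 ≤ Φ r) :
    (∫⁻ lam in Ioi (0:ℝ), ENNReal.ofReal (4 * lam) *
        (ENNReal.ofReal (1 / π) *
          ∫⁻ r in Ioi (0:ℝ),
            ENNReal.ofReal ((max (Φ r - lam ^ 2 / r ^ 2) 0) ^ ((1:ℝ)/2)))
      = ENNReal.ofReal (4 / (3 * π)) *
          ∫⁻ r in Ioi (0:ℝ), ENNReal.ofReal (r ^ 2 * (Φ r) ^ ((3:ℝ)/2))) ∧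
    ((ENNReal.ofReal (1 / (3 * π ^ 2)) *
        ∫⁻ r in Ioi (0:ℝ), ENNReal.ofReal (4 * π * r ^ 2 * (Φ r) ^ ((3:ℝ)/2)) = 1) →
      ∫⁻ lam in Ioi (0:ℝ), ENNReal.ofReal (4 * lam) *
        (ENNReal.ofReal (1 / π) *
          ∫⁻ r in Ioi (0:ℝ),
            ENNReal.ofReal ((max (Φ r - lam ^ 2 / r ^ 2) 0) ^ ((1:ℝ)/2))) = 1) := by
  have hpi := pi_pos
  refine ⟨lintegral_mul_kappa_eq hm h0, fun hnorm => ?_⟩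
  rw [lintegral_mul_kappa_eq hm h0, ← hnorm]
  simp_rw [mul_assoc (4 * π), ENNReal.ofReal_mul (by positivity : (0:ℝ) ≤ 4 * π)]
  rw [lintegral_const_mul' _ _ ENNReal.ofReal_ne_top, ← mul_assoc,
    ← ENNReal.ofReal_mul (by positivity)]
  congr 2
  field_simp
end

section
/- Let β = 6^{−2/3} and define the Tietz potential Φ^T(r) = 1/(r(1+βr)²) for r > 0. Then for every λ ≥ 0, (1/π) ∫₀^∞ (Φ^T(r) − λ²r⁻²)₊^{1/2} dr = max{6^{1/3} − 2λ, 0}. That is, replacing the Thomas–Fermi potential by the Tietz potential in the definition of κ yields exactly the Madelung distribution κ^Madelung. -/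
/-!
For `λ > 0` the radicand is `Φ(r) - λ²/r² = (r - λ²(1 + βr)²) / (r(1 + βr))²`. Its numerator is a
concave quadratic in `r`, which is nowhere positive when `4βλ² ≥ 1` (because `(1 + βr)² ≥ 4βr`)
and otherwise factors as `λ²β²(r - a)(b - r)` with `0 < a < b`. On `[a, b]` the integrand is then
`λβ √((r - a)(b - r)) (1/r - 1/(r + β⁻¹))`, and the elementary integral
`∫_a^b √((r - a)(b - r)) / (r + d) dr = π/2 (√(b + d) - √(a + d))²` together with Vieta's formulas
gives `κ(λ) = β^{-1/2} - 2λ`. At `λ = 0` the integral is `∫₀^∞ dr / (√r (1 + βr)) = π / √β`, by the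
substitution `r = u²`. Finally `β^{-1/2} = 6^{1/3}` for `β = 6^{-2/3}`.
-/

open MeasureTheory Real Set Filter Topology

theorem HasDerivAt.arcsin_of_one_sub_sq_eq {f : ℝ → ℝ} {f' s x : ℝ} (hf : HasDerivAt f f' x)
    (hs : 0 < s) (h : 1 - f x ^ 2 = s ^ 2) : HasDerivAt (fun y => arcsin (f y)) (f' / s) x := by
  have hlt : f x ^ 2 < 1 := by nlinarith
  have hne : f x ≠ -1 ∧ f x ≠ 1 := by
    constructor <;> rintro h' <;> rw [h'] at hlt <;> norm_num at hlt
  have := (Real.hasDerivAt_arcsin hne.1 hne.2).comp x hf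
  rwa [h, sqrt_sq hs.le, one_div_mul_eq_div] at this

theorem integral_Ioi_inv_sqrt_mul_one_add_mul {β : ℝ} (hβ : 0 < β) :
    ∫ r in Ioi (0 : ℝ), (√r * (1 + β * r))⁻¹ = π / √β := by
  have hsβ : 0 < √β := sqrt_pos.2 hβ
  have hderiv : ∀ r ∈ Ioi (0 : ℝ),
      HasDerivAt (fun x => 2 / √β * arctan (√β * √x)) (√r * (1 + β * r))⁻¹ r := by
    intro r (hr : 0 < r)
    refine ((((hasDerivAt_sqrt hr.ne').const_mul √β).arctan).const_mul (2 / √β)).congr_deriv ?_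
    rw [mul_pow, sq_sqrt hβ.le, sq_sqrt hr.le]
    field_simp
  have hlim : Tendsto (fun x => 2 / √β * arctan (√β * √x)) atTop (𝓝 (2 / √β * (π / 2))) :=
    ((tendsto_arctan_atTop.mono_right nhdsWithin_le_nhds).comp
      (tendsto_sqrt_atTop.const_mul_atTop hsβ)).const_mul _
  rw [integral_Ioi_of_hasDerivAt_of_nonneg (by fun_prop) hderiv
    (fun r (hr : 0 < r) => by positivity) hlim]
  simp only [sqrt_zero, mul_zero, arctan_zero, sub_zero]
  ring

section Chord

variable {a b d r : ℝ}

theorem sqrt_chord_eq_zero (hab : a ≤ b) (hr : r ∉ Ioo a b) : √((r - a) * (b - r)) = 0 := by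
  refine sqrt_eq_zero'.2 ?_
  rcases le_or_gt r a with h | h
  · exact mul_nonpos_of_nonpos_of_nonneg (by linarith) (by linarith)
  · exact mul_nonpos_of_nonneg_of_nonpos (by linarith) (by linarith [not_and.1 hr h])

theorem hasDerivAt_sqrt_chord (hr : r ∈ Ioo a b) :
    HasDerivAt (fun x => √((x - a) * (b - x)))
      ((a + b - 2 * r) / (2 * √((r - a) * (b - r)))) r := by
  have hW : 0 < (r - a) * (b - r) := mul_pos (sub_pos.2 hr.1) (sub_pos.2 hr.2)
  refine (((hasDerivAt_id' r).sub_const a).fun_mul ((hasDerivAt_id' r).const_sub b)).sqrt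
    hW.ne' |>.congr_deriv ?_
  ring

theorem hasDerivAt_arcsin_affine (hr : r ∈ Ioo a b) :
    HasDerivAt (fun x => arcsin ((2 * x - a - b) / (b - a))) (1 / √((r - a) * (b - r))) r := by
  have hW : 0 < (r - a) * (b - r) := mul_pos (sub_pos.2 hr.1) (sub_pos.2 hr.2)
  have hba : 0 < b - a := by linarith [hr.1, hr.2]
  have hu : HasDerivAt (fun x => (2 * x - a - b) / (b - a)) (2 / (b - a)) r := by
    simpa using (((hasDerivAt_id r).const_mul 2).sub_const a |>.sub_const b).div_const (b - a)
  convert hu.arcsin_of_one_sub_sq_eq (s := 2 * √((r - a) * (b - r)) / (b - a)) (by positivity)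
    ?_ using 1
  · field_simp
  · simp only [div_pow, mul_pow, sq_sqrt hW.le]
    field_simp
    ring

theorem hasDerivAt_arcsin_moebius (ha : 0 < a) (hr : r ∈ Ioo a b) :
    HasDerivAt (fun x => arcsin (((a + b) * x - 2 * (a * b)) / ((b - a) * x)))
      (√(a * b) / (r * √((r - a) * (b - r)))) r := by
  have hW : 0 < (r - a) * (b - r) := mul_pos (sub_pos.2 hr.1) (sub_pos.2 hr.2)
  have hba : 0 < b - a := by linarith [hr.1, hr.2]
  have hr0 : 0 < r := ha.trans hr.1
  have hab : 0 < a * b := mul_pos ha (by linarith [hr.2])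
  have hu : HasDerivAt (fun x => ((a + b) * x - 2 * (a * b)) / ((b - a) * x))
      (2 * (a * b) / ((b - a) * r ^ 2)) r := by
    refine ((((hasDerivAt_id' r).const_mul (a + b)).sub_const (2 * (a * b))).div
      ((hasDerivAt_id' r).const_mul (b - a)) (by positivity)).congr_deriv ?_
    field_simp
    ring
  convert hu.arcsin_of_one_sub_sq_eq
    (s := 2 * √(a * b) * √((r - a) * (b - r)) / ((b - a) * r)) (by positivity) ?_ using 1
  · field_simp
    rw [sq_sqrt hab.le]
  · simp only [div_pow, mul_pow, sq_sqrt hW.le, sq_sqrt hab.le]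
    field_simp
    ring

noncomputable def chordDivPrimitive (a b x : ℝ) : ℝ :=
  √((x - a) * (b - x)) + (a + b) / 2 * arcsin ((2 * x - a - b) / (b - a))
    - √(a * b) * arcsin (((a + b) * x - 2 * (a * b)) / ((b - a) * x))

theorem hasDerivAt_chordDivPrimitive (ha : 0 < a) (hr : r ∈ Ioo a b) :
    HasDerivAt (chordDivPrimitive a b) (√((r - a) * (b - r)) / r) r := by
  have hW : 0 < (r - a) * (b - r) := mul_pos (sub_pos.2 hr.1) (sub_pos.2 hr.2)
  have hr0 : 0 < r := ha.trans hr.1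
  have hab : 0 < a * b := mul_pos ha (by linarith [hr.2])
  refine (((hasDerivAt_sqrt_chord hr).add ((hasDerivAt_arcsin_affine hr).const_mul _)).sub
    ((hasDerivAt_arcsin_moebius ha hr).const_mul _)).congr_deriv ?_
  field_simp
  rw [sq_sqrt hab.le, sq_sqrt hW.le]
  ring

theorem continuousOn_chordDivPrimitive (ha : 0 < a) (hab : a < b) :
    ContinuousOn (chordDivPrimitive a b) (Icc a b) := by
  have hd : 0 < b - a := sub_pos.2 hab
  unfold chordDivPrimitive
  fun_prop (disch := rintro x ⟨hx, -⟩; have := ha.trans_le hx; positivity)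

theorem chordDivPrimitive_right_sub_left (ha : 0 < a) (hab : a < b) :
    chordDivPrimitive a b b - chordDivPrimitive a b a = π / 2 * (√b - √a) ^ 2 := by
  have hd : 0 < b - a := sub_pos.2 hab
  have hb : 0 < b := ha.trans hab
  have e1 : (2 * b - a - b) / (b - a) = 1 := by field_simp; ring
  have e2 : ((a + b) * b - 2 * (a * b)) / ((b - a) * b) = 1 := by field_simp; ring
  have e3 : (2 * a - a - b) / (b - a) = -1 := by field_simp; ring
  have e4 : ((a + b) * a - 2 * (a * b)) / ((b - a) * a) = -1 := by field_simp; ring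
  simp only [chordDivPrimitive, e1, e2, e3, e4, arcsin_one, arcsin_neg_one, sub_self, mul_zero,
    zero_mul, sqrt_zero, sqrt_mul ha.le, sub_sq, sq_sqrt ha.le, sq_sqrt hb.le]
  ring

theorem intervalIntegrable_sqrt_chord_div_add (hab : a ≤ b) (hd : 0 < a + d) :
    IntervalIntegrable (fun r => √((r - a) * (b - r)) / (r + d)) volume a b :=
  (ContinuousOn.div (by fun_prop) (by fun_prop) fun r hr => by
    linarith [hr.1]).intervalIntegrable_of_Icc hab

theorem intervalIntegrable_sqrt_chord_div (ha : 0 < a) (hab : a ≤ b) :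
    IntervalIntegrable (fun r => √((r - a) * (b - r)) / r) volume a b := by
  simpa using intervalIntegrable_sqrt_chord_div_add (d := 0) hab (by simpa)

theorem integral_sqrt_chord_div (ha : 0 < a) (hab : a < b) :
    ∫ r in a..b, √((r - a) * (b - r)) / r = π / 2 * (√b - √a) ^ 2 := by
  rw [intervalIntegral.integral_eq_sub_of_hasDerivAt_of_le hab.le
    (continuousOn_chordDivPrimitive ha hab) (fun x hx => hasDerivAt_chordDivPrimitive ha hx)
    (intervalIntegrable_sqrt_chord_div ha hab.le), chordDivPrimitive_right_sub_left ha hab]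

theorem integral_sqrt_chord_div_add (hd : 0 < a + d) (hab : a < b) :
    ∫ r in a..b, √((r - a) * (b - r)) / (r + d) = π / 2 * (√(b + d) - √(a + d)) ^ 2 := by
  have h := intervalIntegral.integral_comp_add_right (a := a) (b := b)
    (fun x => √((x - (a + d)) * (b + d - x)) / x) d
  simp only [add_sub_add_right_eq_sub] at h
  rw [h, integral_sqrt_chord_div hd (by linarith)]

end Chord

noncomputable def kappa (Φ : ℝ → ℝ) (lam : ℝ) : ℝ :=
  (1 / π) * ∫ r in Ioi (0 : ℝ), (max (Φ r - lam ^ 2 / r ^ 2) 0) ^ ((1 : ℝ) / 2)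

noncomputable def tietzPotential (β r : ℝ) : ℝ := 1 / (r * (1 + β * r) ^ 2)

theorem max_zero_rpow_one_half (x : ℝ) : max x 0 ^ ((1 : ℝ) / 2) = √x := by
  rcases le_total x 0 with hx | hx
  · rw [max_eq_right hx, zero_rpow one_half_pos.ne', sqrt_eq_zero'.2 hx]
  · rw [max_eq_left hx, sqrt_eq_rpow]

theorem kappa_eq (Φ : ℝ → ℝ) (lam : ℝ) :
    kappa Φ lam = (1 / π) * ∫ r in Ioi (0 : ℝ), √(Φ r - lam ^ 2 / r ^ 2) := by
  simp only [kappa, max_zero_rpow_one_half]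

section Tietz

variable {β lam r : ℝ}

theorem tietzPotential_sub_div_sq (hβ : 0 ≤ β) (hr : 0 < r) :
    tietzPotential β r - lam ^ 2 / r ^ 2
      = (r - lam ^ 2 * (1 + β * r) ^ 2) / (r * (1 + β * r)) ^ 2 := by
  have : 0 < 1 + β * r := by positivity
  rw [tietzPotential]
  field_simp

theorem kappa_tietzPotential_of_one_le (hβ : 0 < β) (h : 1 ≤ 4 * β * lam ^ 2) :
    kappa (tietzPotential β) lam = 0 := by
  have hzero : EqOn (fun r => √(tietzPotential β r - lam ^ 2 / r ^ 2)) 0 (Ioi 0) := by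
    intro r (hr : 0 < r)
    dsimp only
    rw [Pi.zero_apply, tietzPotential_sub_div_sq hβ.le hr]
    refine sqrt_eq_zero'.2 (div_nonpos_of_nonpos_of_nonneg ?_ (sq_nonneg _))
    nlinarith [mul_nonneg (sq_nonneg lam) (sq_nonneg (1 - β * r)),
      mul_le_mul_of_nonneg_right h hr.le]
  rw [kappa_eq, setIntegral_congr_fun measurableSet_Ioi hzero, Pi.zero_def, integral_zero,
    mul_zero]

theorem kappa_tietzPotential_zero (hβ : 0 < β) : kappa (tietzPotential β) 0 = (√β)⁻¹ := by
  have hpt : EqOn (fun r => √(tietzPotential β r - 0 ^ 2 / r ^ 2))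
      (fun r => (√r * (1 + β * r))⁻¹) (Ioi 0) := by
    intro r (hr : 0 < r)
    have : 0 < 1 + β * r := by positivity
    simp only [tietzPotential, zero_pow two_ne_zero, zero_div, sub_zero, one_div, sqrt_inv,
      sqrt_mul hr.le, sqrt_sq this.le]
  rw [kappa_eq, setIntegral_congr_fun measurableSet_Ioi hpt,
    integral_Ioi_inv_sqrt_mul_one_add_mul hβ]
  field_simp

theorem exists_tietz_roots (hβ : 0 < β) (hlam : 0 < lam) (h : 4 * β * lam ^ 2 < 1) :
    ∃ a b, 0 < a ∧ a < b ∧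
      ∀ r, r - lam ^ 2 * (1 + β * r) ^ 2 = lam ^ 2 * β ^ 2 * ((r - a) * (b - r)) := by
  set s := √(1 - 4 * β * lam ^ 2)
  have hs : 0 < s := sqrt_pos.2 (by linarith)
  have hs2 : s ^ 2 = 1 - 4 * β * lam ^ 2 := sq_sqrt (by linarith)
  have hden : 0 < 2 * lam ^ 2 * β ^ 2 := by positivity
  refine ⟨(1 - 2 * lam ^ 2 * β - s) / (2 * lam ^ 2 * β ^ 2),
    (1 - 2 * lam ^ 2 * β + s) / (2 * lam ^ 2 * β ^ 2), div_pos ?_ hden,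
    div_lt_div_of_pos_right (by linarith) hden, fun r => ?_⟩
  · nlinarith [pow_pos (mul_pos (pow_pos hlam 2) hβ) 2]
  · field_simp
    linear_combination (-1 : ℝ) * hs2

theorem sqrt_tietzPotential_sub_eq {a b : ℝ} (hβ : 0 < β) (hlam : 0 ≤ lam) (hr : 0 < r)
    (hroots : ∀ r, r - lam ^ 2 * (1 + β * r) ^ 2 = lam ^ 2 * β ^ 2 * ((r - a) * (b - r))) :
    √(tietzPotential β r - lam ^ 2 / r ^ 2)
      = lam * β * (√((r - a) * (b - r)) / r - √((r - a) * (b - r)) / (r + β⁻¹)) := by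
  have : 0 < 1 + β * r := by positivity
  rw [tietzPotential_sub_div_sq hβ.le hr, hroots, ← mul_pow, sqrt_div' _ (sq_nonneg _),
    sqrt_sq (by positivity), sqrt_mul (by positivity), sqrt_sq (by positivity)]
  field_simp
  ring

theorem kappa_tietzPotential_of_lt_one (hβ : 0 < β) (hlam : 0 < lam) (h : 4 * β * lam ^ 2 < 1) :
    kappa (tietzPotential β) lam = (√β)⁻¹ - 2 * lam := by
  obtain ⟨a, b, ha, hab, hroots⟩ := exists_tietz_roots hβ hlam h
  have hb : 0 < b := ha.trans hab
  have hβc : β * β⁻¹ = 1 := mul_inv_cancel₀ hβ.ne'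
  -- Vieta: evaluate the factorization at `r = 0` and at the pole `r = -β⁻¹`.
  have hprod : √a * √b = β⁻¹ := by
    have : a * b = β⁻¹ ^ 2 := by
      refine mul_left_cancel₀ (by positivity : lam ^ 2 * β ^ 2 ≠ 0) ?_
      linear_combination hroots 0 - lam ^ 2 * (β * β⁻¹ + 1) * hβc
    rw [← sqrt_mul ha.le, this, sqrt_sq (by positivity)]
  have hshift : √(a + β⁻¹) * √(b + β⁻¹) = (√β)⁻¹ / (lam * β) := by
    have : (a + β⁻¹) * (b + β⁻¹) = β⁻¹ / (lam * β) ^ 2 := by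
      rw [eq_div_iff (by positivity)]
      linear_combination hroots (-β⁻¹) + lam ^ 2 * (β * β⁻¹ - 1) * hβc
    rw [← sqrt_mul (by positivity), this, sqrt_div' _ (sq_nonneg _), sqrt_sq (by positivity),
      sqrt_inv]
  have hpt : EqOn (fun r => √(tietzPotential β r - lam ^ 2 / r ^ 2))
      (fun r => lam * β * (√((r - a) * (b - r)) / r - √((r - a) * (b - r)) / (r + β⁻¹)))
      (Ioi 0) :=
    fun r hr => sqrt_tietzPotential_sub_eq hβ hlam.le hr hroots
  have hvanish : ∀ r ∈ Ioi 0 \ Ioc a b,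
      lam * β * (√((r - a) * (b - r)) / r - √((r - a) * (b - r)) / (r + β⁻¹)) = 0 := by
    intro r hr
    rw [sqrt_chord_eq_zero hab.le fun h' => hr.2 ⟨h'.1, h'.2.le⟩]
    simp
  rw [kappa_eq, setIntegral_congr_fun measurableSet_Ioi hpt,
    setIntegral_eq_of_subset_of_forall_sdiff_eq_zero measurableSet_Ioi
      (fun r hr => ha.trans hr.1) hvanish,
    ← intervalIntegral.integral_of_le hab.le, intervalIntegral.integral_const_mul,
    intervalIntegral.integral_sub (intervalIntegrable_sqrt_chord_div ha hab.le)
      (intervalIntegrable_sqrt_chord_div_add hab.le (by positivity)),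
    integral_sqrt_chord_div ha hab, integral_sqrt_chord_div_add (by positivity) hab,
    sub_sq, sub_sq, sq_sqrt ha.le, sq_sqrt hb.le, sq_sqrt (by positivity),
    sq_sqrt (by positivity : 0 ≤ a + β⁻¹), mul_assoc 2 √b, mul_comm √b, hprod,
    mul_assoc 2 √(b + β⁻¹), mul_comm √(b + β⁻¹), hshift]
  field_simp
  ring

theorem kappa_tietzPotential (hβ : 0 < β) (hlam : 0 ≤ lam) :
    kappa (tietzPotential β) lam = max ((√β)⁻¹ - 2 * lam) 0 := by
  have hsβ : 0 < √β := sqrt_pos.2 hβ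
  have hsq : 4 * β * lam ^ 2 = (2 * lam * √β) ^ 2 := by rw [mul_pow, sq_sqrt hβ.le]; ring
  rcases le_or_gt 1 (4 * β * lam ^ 2) with h | h
  · rw [kappa_tietzPotential_of_one_le hβ h, max_eq_right (sub_nonpos.2 ?_)]
    rw [← one_div, div_le_iff₀ hsβ]
    nlinarith [mul_nonneg (mul_nonneg zero_le_two hlam) hsβ.le]
  · rw [max_eq_left (sub_nonneg.2 ?_)]
    · rcases hlam.eq_or_lt with rfl | hlam
      · simpa using kappa_tietzPotential_zero hβ
      · exact kappa_tietzPotential_of_lt_one hβ hlam h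
    · rw [← one_div, le_div_iff₀ hsβ]
      nlinarith [mul_nonneg (mul_nonneg zero_le_two hlam) hsβ.le]

end Tietz

/-- With `β = 6^{−2/3}` and Tietz potential `Φ^T(r) = 1/(r(1+βr)²)`, the
angular momentum distribution built from `Φ^T` equals the Madelung distribution:
`(1/π) ∫₀^∞ (Φ^T(r) − λ²r⁻²)₊^{1/2} dr = max{6^{1/3} − 2λ, 0}` for every `λ ≥ 0`. -/
theorem tietz_gives_madelung (lam : ℝ) (hlam : 0 ≤ lam) :
    (1 / π) * ∫ r in Ioi (0:ℝ),
        (max (1 / (r * (1 + (6:ℝ) ^ (-(2:ℝ)/3) * r) ^ 2) - lam ^ 2 / r ^ 2) 0) ^ ((1:ℝ)/2)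
      = max ((6:ℝ) ^ ((1:ℝ)/3) - 2 * lam) 0 := by
  have h6 : (√((6:ℝ) ^ (-(2:ℝ)/3)))⁻¹ = 6 ^ ((1:ℝ)/3) := by
    rw [sqrt_eq_rpow, ← rpow_mul (by norm_num), ← rpow_neg (by norm_num)]
    norm_num
  rw [← h6]
  exact kappa_tietzPotential (by positivity) hlam
end

section
/- Let Φ : (0,∞) → ℝ have the Thomas–Fermi potential properties and let λ > 0. Then the function μ ↦ e_G(λ,μ) is differentiable at every μ > 0 with derivative ∂_μ e_G(λ,μ) = n(λ,μ), and at μ = 0 it has the (finite) right-hand derivative n(λ,0) = κ(λ). -/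
open MeasureTheory Real Filter Set

/-!
Outside a compact interval `[a, b] ⊂ (0, ∞)` the effective potential `Φ(r) − λ²/r²` is
nonpositive: near `0` because `Φ(r) ≈ 1/r` is dominated by `λ²/r²`, near `∞` because
`Φ(r) ≤ C/r⁴` is. So for `μ ≥ 0` both integrals only see `[a, b]`, where the integrand is
continuous and `x ↦ x₊^{3/2}` is `C¹` with derivative `(3/2) x₊^{1/2}`; differentiation under
the integral sign then gives `∂_μ e_G = n`, only from the right at `μ = 0` because the
localization needs `μ ≥ 0`.
-/

open Asymptotics Topology

lemma continuous_max_zero_rpow {p : ℝ} (hp : 0 ≤ p) : Continuous fun x : ℝ => max x 0 ^ p :=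
  (continuous_id.max continuous_const).rpow_const fun _ => Or.inr hp

lemma hasDerivAt_max_zero_rpow {p : ℝ} (hp : 1 < p) (s : ℝ) :
    HasDerivAt (fun x : ℝ => max x 0 ^ p) (p * max s 0 ^ (p - 1)) s := by
  have hp₀ : p - 1 ≠ 0 := (sub_pos.2 hp).ne'
  rcases lt_trichotomy s 0 with hs | rfl | hs
  · have hev : (fun x : ℝ => max x 0 ^ p) =ᶠ[𝓝 s] fun _ => 0 := by
      filter_upwards [eventually_lt_nhds hs] with x hx
      rw [max_eq_right hx.le, zero_rpow (by positivity)]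
    rw [max_eq_right hs.le, zero_rpow hp₀, mul_zero]
    exact (hasDerivAt_const s 0).congr_of_eventuallyEq hev
  · -- `x₊ ^ p = x₊ ^ (p - 1) * x₊` is `o(1) * O(x)`
    rw [max_self, zero_rpow hp₀, mul_zero, hasDerivAt_iff_isLittleO_nhds_zero]
    have hsmall : (fun x : ℝ => max x 0 ^ (p - 1)) =o[𝓝 0] (fun _ => (1:ℝ)) := by
      refine (isLittleO_one_iff ℝ).2 ?_
      simpa [zero_rpow hp₀] using (continuous_max_zero_rpow (sub_pos.2 hp).le).tendsto 0
    have hlin : (fun x : ℝ => max x 0) =O[𝓝 0] fun x => x :=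
      IsBigO.of_bound 1 (Eventually.of_forall fun x => by
        rw [norm_eq_abs, norm_eq_abs, one_mul, abs_of_nonneg (le_max_right x 0)]
        exact max_le (le_abs_self x) (abs_nonneg x))
    refine (hsmall.mul_isBigO hlin).congr' (Eventually.of_forall fun x => ?_)
      (Eventually.of_forall fun x => one_mul x)
    simp only [zero_add, max_self, zero_rpow (by linarith : p ≠ 0), sub_zero, smul_zero]
    rw [← rpow_add_one' (le_max_right x 0) (by linarith), sub_add_cancel]
  · have hev : (fun x : ℝ => max x 0 ^ p) =ᶠ[𝓝 s] fun x => x ^ p := by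
      filter_upwards [eventually_gt_nhds hs] with x hx
      rw [max_eq_left hx.le]
    rw [max_eq_left hs.le]
    exact (hasDerivAt_rpow_const (Or.inl hs.ne')).congr_of_eventuallyEq hev

lemma hasDerivAt_setIntegral_max_sub_rpow {V : ℝ → ℝ} {K : Set ℝ} (hK : IsCompact K)
    (hV : ContinuousOn V K) {p : ℝ} (hp : 1 < p) (μ₀ : ℝ) :
    HasDerivAt (fun μ => ∫ r in K, max (V r - μ) 0 ^ p)
      (-(p * ∫ r in K, max (V r - μ₀) 0 ^ (p - 1))) μ₀ := by
  obtain ⟨M, hM⟩ := hK.exists_bound_of_continuousOn hV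
  have hKm : MeasurableSet K := hK.isClosed.measurableSet
  have hcont (q : ℝ) (hq : 0 ≤ q) (μ : ℝ) : ContinuousOn (fun r => max (V r - μ) 0 ^ q) K :=
    (continuous_max_zero_rpow hq).comp_continuousOn (hV.sub continuousOn_const)
  have hle (r : ℝ) (hr : r ∈ K) (μ : ℝ) (hμ : μ ∈ Metric.ball μ₀ 1) :
      max (V r - μ) 0 ≤ M + |μ₀| + 1 := by
    have hVr : V r ≤ M := (le_abs_self _).trans (hM r hr)
    have hμ' : |μ - μ₀| < 1 := hμ
    have hM₀ : 0 ≤ M := (norm_nonneg _).trans (hM r hr)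
    refine max_le ?_ (by positivity)
    linarith [neg_abs_le μ, abs_sub_abs_le_abs_sub μ μ₀]
  have h_diff : ∀ᵐ r ∂volume.restrict K, ∀ μ ∈ Metric.ball μ₀ 1,
      HasDerivAt (fun μ => max (V r - μ) 0 ^ p) (-(p * max (V r - μ) 0 ^ (p - 1))) μ :=
    Eventually.of_forall fun r μ _ =>
      ((hasDerivAt_max_zero_rpow hp _).comp μ ((hasDerivAt_id' μ).const_sub (V r))).congr_deriv
        (by ring)
  have h_bound : ∀ᵐ r ∂volume.restrict K, ∀ μ ∈ Metric.ball μ₀ 1,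
      ‖-(p * max (V r - μ) 0 ^ (p - 1))‖ ≤ p * (M + |μ₀| + 1) ^ (p - 1) := by
    refine (ae_restrict_iff' hKm).2 (Eventually.of_forall fun r hr μ hμ => ?_)
    rw [norm_neg, norm_mul, norm_of_nonneg (by linarith),
      norm_of_nonneg (rpow_nonneg (le_max_right _ _) _)]
    exact mul_le_mul_of_nonneg_left
      (rpow_le_rpow (le_max_right _ _) (hle r hr μ hμ) (by linarith)) (by linarith)
  have h := hasDerivAt_integral_of_dominated_loc_of_deriv_le (Metric.ball_mem_nhds μ₀ one_pos)
    (Eventually.of_forall fun μ => (hcont p (by linarith) μ).aestronglyMeasurable hKm)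
    ((hcont p (by linarith) μ₀).integrableOn_compact hK)
    (((hcont (p - 1) (by linarith) μ₀).aestronglyMeasurable hKm).const_mul p).neg h_bound
    (integrableOn_const hK.measure_lt_top.ne) h_diff
  simpa only [integral_neg, integral_const_mul] using h.2

section Localization

variable {V : ℝ → ℝ} {S K : Set ℝ}

lemma setIntegral_max_sub_rpow_eq_of_nonpos (hS : MeasurableSet S) (hKS : K ⊆ S)
    (hVK : ∀ r ∈ S \ K, V r ≤ 0) {μ p : ℝ} (hμ : 0 ≤ μ) (hp : 0 < p) :
    ∫ r in S, max (V r - μ) 0 ^ p = ∫ r in K, max (V r - μ) 0 ^ p :=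
  setIntegral_eq_of_subset_of_forall_sdiff_eq_zero hS hKS fun r hr => by
    rw [max_eq_right (by linarith [hVK r hr]), zero_rpow hp.ne']

lemma hasDerivWithinAt_setIntegral_max_sub_rpow (hS : MeasurableSet S) (hK : IsCompact K)
    (hKS : K ⊆ S) (hV : ContinuousOn V K) (hVK : ∀ r ∈ S \ K, V r ≤ 0) {p μ : ℝ} (hp : 1 < p)
    (hμ : 0 ≤ μ) :
    HasDerivWithinAt (fun t => ∫ r in S, max (V r - t) 0 ^ p)
      (-(p * ∫ r in S, max (V r - μ) 0 ^ (p - 1))) (Ici 0) μ := by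
  have hloc (q : ℝ) (hq : 0 < q) (t : ℝ) (ht : 0 ≤ t) :=
    setIntegral_max_sub_rpow_eq_of_nonpos hS hKS hVK ht hq
  rw [hloc (p - 1) (by linarith) μ hμ]
  exact (hasDerivAt_setIntegral_max_sub_rpow hK hV hp μ).hasDerivWithinAt.congr
    (fun t ht => hloc p (by linarith) t ht) (hloc p (by linarith) μ hμ)

end Localization

lemma eventually_sub_div_sq_nonpos_nhdsGT_zero {Φ : ℝ → ℝ}
    (hΦ : Tendsto (fun r => r * Φ r) (𝓝[>] 0) (𝓝 1)) {lam : ℝ} (hlam : lam ≠ 0) :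
    ∀ᶠ r in 𝓝[>] 0, Φ r - lam ^ 2 / r ^ 2 ≤ 0 := by
  filter_upwards [hΦ.eventually (eventually_le_nhds one_lt_two), self_mem_nhdsWithin,
    nhdsWithin_le_nhds (eventually_lt_nhds (show (0:ℝ) < lam ^ 2 / 2 by positivity))]
    with r hΦr (hr : 0 < r) hr'
  rw [sub_nonpos, le_div_iff₀ (by positivity)]
  nlinarith

lemma eventually_sub_div_sq_nonpos_atTop {Φ : ℝ → ℝ} {C : ℝ}
    (hC : ∀ r, 1 ≤ r → Φ r ≤ C / r ^ 4) {lam : ℝ} (hlam : lam ≠ 0) :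
    ∀ᶠ r in atTop, Φ r - lam ^ 2 / r ^ 2 ≤ 0 := by
  filter_upwards [eventually_ge_atTop 1, eventually_ge_atTop (C / lam ^ 2)] with r hr hrC
  rw [div_le_iff₀ (by positivity)] at hrC
  have hCr : C / r ^ 4 ≤ lam ^ 2 / r ^ 2 := by
    rw [div_le_div_iff₀ (by positivity) (by positivity)]
    calc C * r ^ 2 ≤ r * lam ^ 2 * r ^ 2 := by gcongr
      _ ≤ lam ^ 2 * r ^ 4 := by
        nlinarith [mul_nonneg (mul_nonneg (sq_nonneg lam) (pow_nonneg (by linarith : (0:ℝ) ≤ r) 3))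
          (sub_nonneg.2 hr)]
  linarith [hC r hr]

lemma exists_Icc_forall_sub_div_sq_nonpos {Φ : ℝ → ℝ}
    (hΦ : Tendsto (fun r => r * Φ r) (𝓝[>] 0) (𝓝 1)) {C : ℝ} (hC : ∀ r, 1 ≤ r → Φ r ≤ C / r ^ 4)
    {lam : ℝ} (hlam : lam ≠ 0) :
    ∃ a b, 0 < a ∧ ∀ r ∈ Ioi 0 \ Icc a b, Φ r - lam ^ 2 / r ^ 2 ≤ 0 := by
  obtain ⟨a, ha, hsmall⟩ :=
    mem_nhdsGT_iff_exists_Ioo_subset.1 (eventually_sub_div_sq_nonpos_nhdsGT_zero hΦ hlam)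
  obtain ⟨b, hlarge⟩ := eventually_atTop.1 (eventually_sub_div_sq_nonpos_atTop hC hlam)
  refine ⟨a, b, ha, fun r ⟨hr, hrab⟩ => ?_⟩
  rcases not_and_or.1 hrab with hra | hrb
  · exact hsmall ⟨hr, not_le.1 hra⟩
  · exact hlarge r (not_le.1 hrb).le

/-- For a Thomas–Fermi potential `Φ` and `λ > 0`, the map `μ ↦ e_G(λ,μ)` is
differentiable at every `μ > 0` with derivative `n(λ,μ)`, and has right-hand derivative
`n(λ,0) = κ(λ)` at `μ = 0`. -/
theorem eG_hasDerivAt (Φ : ℝ → ℝ) (hΦ : HasTF Φ) (lam : ℝ) (hlam : 0 < lam) :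
    (∀ μ : ℝ, 0 < μ → HasDerivAt (fun t => eG Φ lam t) (nSC Φ lam μ) μ) ∧
    HasDerivWithinAt (fun t => eG Φ lam t) (nSC Φ lam 0) (Ici 0) 0 := by
  obtain ⟨hcont, -, hlim, C, -, hC⟩ := hΦ
  obtain ⟨a, b, ha, hV⟩ := exists_Icc_forall_sub_div_sq_nonpos hlim hC hlam.ne'
  have hab : Icc a b ⊆ Ioi 0 := fun r hr => ha.trans_le hr.1
  have hVc : ContinuousOn (fun r => Φ r - lam ^ 2 / r ^ 2) (Icc a b) :=
    (hcont.mono hab).sub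
      (continuousOn_const.div (continuousOn_pow 2) fun r hr => (pow_pos (hab hr) 2).ne')
  have hderiv (μ : ℝ) (hμ : 0 ≤ μ) :
      HasDerivWithinAt (fun t => eG Φ lam t) (nSC Φ lam μ) (Ici 0) μ := by
    have h := (hasDerivWithinAt_setIntegral_max_sub_rpow measurableSet_Ioi isCompact_Icc hab hVc
      hV (by norm_num : (1:ℝ) < 3 / 2) hμ).const_mul (-(2 / (3 * π)))
    refine h.congr_deriv ?_
    rw [nSC, show (3:ℝ) / 2 - 1 = 1 / 2 by norm_num]
    field_simp
  exact ⟨fun μ hμ => (hderiv μ hμ.le).hasDerivAt (Ici_mem_nhds hμ), hderiv 0 le_rfl⟩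
end

section
/- Let Φ : (0,∞) → ℝ have the Thomas–Fermi potential properties and let λ > 0. Then n(λ,·) is strictly decreasing as long as it is positive: for all 0 ≤ μ₀ < μ₁, if n(λ,μ₀) > 0 then n(λ,μ₁) < n(λ,μ₀). -/
open MeasureTheory Real Filter Set

/-- For a Thomas–Fermi potential `Φ` and `λ > 0`, the counting function
`n(λ,·)` is strictly decreasing as long as it is positive. -/
theorem nSC_strictly_decreasing (Φ : ℝ → ℝ) (hΦ : HasTF Φ) (lam : ℝ) (hlam : 0 < lam) :
    ∀ μ₀ μ₁ : ℝ, 0 ≤ μ₀ → μ₀ < μ₁ → 0 < nSC Φ lam μ₀ → nSC Φ lam μ₁ < nSC Φ lam μ₀ := by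
  intro μ₀ μ₁ hμ₀ hμ hpos
  obtain ⟨hcont, hposΦ, -, -⟩ := hΦ
  set ν : Measure ℝ := volume.restrict (Ioi 0) with hν
  set f : ℝ → ℝ → ℝ := fun μ r => (max (Φ r - lam ^ 2 / r ^ 2 - μ) 0) ^ ((1:ℝ)/2) with hf
  have hπ : (0:ℝ) < 1 / π := by positivity
  -- measurability
  have hmeas : ∀ μ : ℝ, AEStronglyMeasurable (f μ) ν := by
    intro μ
    apply ContinuousOn.aestronglyMeasurable _ measurableSet_Ioi
    apply ContinuousOn.rpow_const
    · have h2 : ContinuousOn (fun r : ℝ => lam ^ 2 / r ^ 2) (Ioi 0) :=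
        continuousOn_const.div (continuous_pow 2).continuousOn
          (fun x hx => by have : (0:ℝ) < x := hx; positivity)
      exact ((hcont.sub h2).sub continuousOn_const).sup continuousOn_const
    · intro x _; right; norm_num
  have hnonneg : ∀ μ r, 0 ≤ f μ r := fun μ r => Real.rpow_nonneg (le_max_right _ _) _
  have hle : ∀ r, f μ₁ r ≤ f μ₀ r := by
    intro r
    apply Real.rpow_le_rpow (le_max_right _ _) _ (by norm_num)
    exact max_le_max (by linarith) le_rfl
  -- integral positivity
  have hI0 : 0 < ∫ r, f μ₀ r ∂ν := by
    have := hpos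
    rw [nSC] at this
    nlinarith [this, mul_pos hπ (lt_of_not_ge (fun h => by nlinarith : ¬ (∫ r, f μ₀ r ∂ν) ≤ 0))]
  have hint0 : Integrable (f μ₀) ν := by
    by_contra h
    rw [integral_undef h] at hI0
    exact lt_irrefl 0 hI0
  have hint1 : Integrable (f μ₁) ν := by
    refine hint0.mono (hmeas μ₁) (Filter.Eventually.of_forall fun r => ?_)
    rw [Real.norm_eq_abs, Real.norm_eq_abs, abs_of_nonneg (hnonneg _ _),
      abs_of_nonneg (hnonneg _ _)]
    exact hle r
  -- strict inequality on the support of f μ₀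
  have hsupp : Function.support (f μ₀) ⊆ Function.support (fun r => f μ₀ r - f μ₁ r) := by
    intro r hr
    have hne : f μ₀ r ≠ 0 := hr
    have hmaxpos : 0 < Φ r - lam ^ 2 / r ^ 2 - μ₀ := by
      by_contra h
      push_neg at h
      have : max (Φ r - lam ^ 2 / r ^ 2 - μ₀) 0 = 0 := max_eq_right h
      simp [hf, this] at hne
    have hlt : f μ₁ r < f μ₀ r := by
      apply Real.rpow_lt_rpow (le_max_right _ _) _ (by norm_num)
      have h1 : max (Φ r - lam ^ 2 / r ^ 2 - μ₀) 0 = Φ r - lam ^ 2 / r ^ 2 - μ₀ :=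
        max_eq_left hmaxpos.le
      rw [h1]
      exact max_lt (by linarith) hmaxpos
    simp only [Function.mem_support]
    intro h
    linarith [h, hlt]
  have hsupp0 : 0 < ν (Function.support (f μ₀)) :=
    (integral_pos_iff_support_of_nonneg_ae
      (Filter.Eventually.of_forall (hnonneg μ₀)) hint0).mp hI0
  have hgnonneg : 0 ≤ᵐ[ν] fun r => f μ₀ r - f μ₁ r :=
    Filter.Eventually.of_forall fun r => by simp [hle r]
  have hgint : Integrable (fun r => f μ₀ r - f μ₁ r) ν := hint0.sub hint1
  have hIg : 0 < ∫ r, (f μ₀ r - f μ₁ r) ∂ν := by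
    rw [integral_pos_iff_support_of_nonneg_ae hgnonneg hgint]
    exact lt_of_lt_of_le hsupp0 (measure_mono hsupp)
  rw [integral_sub hint0 hint1] at hIg
  rw [nSC, nSC]
  have : (∫ r, f μ₁ r ∂ν) < ∫ r, f μ₀ r ∂ν := by linarith
  exact mul_lt_mul_of_pos_left this hπ
end

section
/- Let Φ : (0,∞) → ℝ have the Thomas–Fermi potential properties, let λ > 0, and for n ≥ 0 define the canonical energy e(λ,n) = sup_{μ ≥ 0} (e_G(λ,μ) − μn). Then e(λ,n) ≥ e_G(λ,0) for every n ≥ 0, with equality if and only if n ≥ n(λ,0). Moreover e(λ,0) = 0. -/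
/-!
The effective potential `Φ(r) − λ²/r²` is positive only on a compact subset of `(0,∞)`: near `0`
the centrifugal term beats `Φ(r) ≈ 1/r`, near `∞` it beats `Φ(r) ≤ C/r⁴`. Hence all integrals are
finite, and `e_G(λ,μ) = 0` once `μ` exceeds the maximum of the effective potential.
Integrating the tangent-line inequalities of the convex function `t ↦ t₊^{3/2}` (derivative
`(3/2) t₊^{1/2}`) gives, for `μ ≥ 0`,
`μ n(λ,μ) ≤ e_G(λ,μ) − e_G(λ,0) ≤ μ n(λ,0)`.
The upper bound shows `e_G(λ,μ) − μn ≤ e_G(λ,0)` when `n ≥ n(λ,0)`. If `n < n(λ,0)`, right-continuity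
of `n(λ,·)` at `0` (dominated convergence) gives `μ > 0` with `n < n(λ,μ)`, and the lower bound
shows that this `μ` beats `μ = 0`. Finally `e_G ≤ 0` and `e_G(λ,M) = 0` give `e(λ,0) = 0`.
-/

open MeasureTheory Real Filter Set

/-- The canonical energy `e(λ,n) = sup_{μ ≥ 0} (e_G(λ,μ) − μn)`. -/
noncomputable def eCan (Φ : ℝ → ℝ) (lam n : ℝ) : ℝ :=
  sSup ((fun μ => eG Φ lam μ - μ * n) '' Ici 0)

open Topology

lemma posPart_rpow_three_halves (x : ℝ) : max x 0 ^ ((3:ℝ)/2) = √(max x 0) ^ 3 := by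
  rw [Real.rpow_div_two_eq_sqrt _ (le_max_right x 0)]
  norm_cast

lemma posPart_rpow_half (x : ℝ) : max x 0 ^ ((1:ℝ)/2) = √(max x 0) := by
  rw [Real.sqrt_eq_rpow]

lemma posPart_rpow_three_halves_sub_le {x y : ℝ} (h : y ≤ x) :
    max x 0 ^ ((3:ℝ)/2) - max y 0 ^ ((3:ℝ)/2) ≤ 3/2 * (x - y) * max x 0 ^ ((1:ℝ)/2) := by
  rw [posPart_rpow_three_halves, posPart_rpow_three_halves, posPart_rpow_half]
  set s := √(max x 0)
  set t := √(max y 0)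
  have hs : 0 ≤ s := Real.sqrt_nonneg _
  have ht : 0 ≤ t := Real.sqrt_nonneg _
  have hts : t ≤ s := Real.sqrt_le_sqrt (max_le_max h le_rfl)
  rcases le_or_gt x 0 with hx | hx
  · have hs0 : s = 0 := by simp [s, max_eq_right hx]
    have ht0 : t = 0 := le_antisymm (hs0 ▸ hts) ht
    simp [hs0, ht0]
  · have hsx : s ^ 2 = x := by rw [Real.sq_sqrt (le_max_right _ _), max_eq_left hx.le]
    have hyt : y ≤ t ^ 2 := by rw [Real.sq_sqrt (le_max_right _ _)]; exact le_max_left _ _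
    -- `s³ - t³ ≤ (3/2)(s² - t²)s` is `0 ≤ (s - t)²(s + 2t)`
    nlinarith [mul_nonneg (mul_self_nonneg (s - t)) (by positivity : (0:ℝ) ≤ s + 2 * t),
      mul_nonneg (sub_nonneg.2 hyt) hs]

lemma mul_posPart_rpow_half_le_sub {x y : ℝ} (h : y ≤ x) :
    3/2 * (x - y) * max y 0 ^ ((1:ℝ)/2) ≤ max x 0 ^ ((3:ℝ)/2) - max y 0 ^ ((3:ℝ)/2) := by
  rw [posPart_rpow_three_halves, posPart_rpow_three_halves, posPart_rpow_half]
  set s := √(max x 0)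
  set t := √(max y 0)
  have hs : 0 ≤ s := Real.sqrt_nonneg _
  have hts : t ≤ s := Real.sqrt_le_sqrt (max_le_max h le_rfl)
  rcases le_or_gt y 0 with hy | hy
  · have ht0 : t = 0 := by simp [t, max_eq_right hy]
    simp [ht0]
    positivity
  · have hty : t ^ 2 = y := by rw [Real.sq_sqrt (le_max_right _ _), max_eq_left hy.le]
    have hsx : s ^ 2 = x := by
      rw [Real.sq_sqrt (le_max_right _ _), max_eq_left (hy.le.trans h)]
    -- `(3/2)(s² - t²)t ≤ s³ - t³` is `0 ≤ (s - t)²(2s + t)`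
    nlinarith [mul_nonneg (mul_self_nonneg (s - t)) (by positivity : (0:ℝ) ≤ 2 * s + t)]

section Integrals

variable {α : Type*} [MeasurableSpace α] {ν : Measure α} {V : α → ℝ} {μ₁ μ₂ : ℝ}

lemma integral_posPart_rpow_three_halves_sub_le (hμ : μ₁ ≤ μ₂)
    (h₁ : Integrable (fun x => max (V x - μ₁) 0 ^ ((3:ℝ)/2)) ν)
    (h₂ : Integrable (fun x => max (V x - μ₂) 0 ^ ((3:ℝ)/2)) ν)
    (h₁' : Integrable (fun x => max (V x - μ₁) 0 ^ ((1:ℝ)/2)) ν) :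
    ∫ x, max (V x - μ₁) 0 ^ ((3:ℝ)/2) ∂ν - ∫ x, max (V x - μ₂) 0 ^ ((3:ℝ)/2) ∂ν
      ≤ 3/2 * (μ₂ - μ₁) * ∫ x, max (V x - μ₁) 0 ^ ((1:ℝ)/2) ∂ν := by
  rw [← integral_sub h₁ h₂, ← integral_const_mul]
  refine integral_mono (h₁.sub h₂) (h₁'.const_mul _) fun x => ?_
  simpa using posPart_rpow_three_halves_sub_le (by linarith : V x - μ₂ ≤ V x - μ₁)

lemma mul_integral_posPart_rpow_half_le_sub (hμ : μ₁ ≤ μ₂)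
    (h₁ : Integrable (fun x => max (V x - μ₁) 0 ^ ((3:ℝ)/2)) ν)
    (h₂ : Integrable (fun x => max (V x - μ₂) 0 ^ ((3:ℝ)/2)) ν)
    (h₂' : Integrable (fun x => max (V x - μ₂) 0 ^ ((1:ℝ)/2)) ν) :
    3/2 * (μ₂ - μ₁) * ∫ x, max (V x - μ₂) 0 ^ ((1:ℝ)/2) ∂ν
      ≤ ∫ x, max (V x - μ₁) 0 ^ ((3:ℝ)/2) ∂ν - ∫ x, max (V x - μ₂) 0 ^ ((3:ℝ)/2) ∂ν := by
  rw [← integral_sub h₁ h₂, ← integral_const_mul]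
  refine integral_mono (h₂'.const_mul _) (h₁.sub h₂) fun x => ?_
  simpa using mul_posPart_rpow_half_le_sub (by linarith : V x - μ₂ ≤ V x - μ₁)

lemma continuousWithinAt_integral_posPart_sub_rpow {p : ℝ} (hp : 0 < p) (hV : AEMeasurable V ν)
    (h₁ : Integrable (fun x => max (V x - μ₁) 0 ^ p) ν) :
    ContinuousWithinAt (fun μ => ∫ x, max (V x - μ) 0 ^ p ∂ν) (Ici μ₁) μ₁ := by
  refine continuousWithinAt_of_dominated (bound := fun x => max (V x - μ₁) 0 ^ p)
    (Eventually.of_forall fun μ => ?_) ?_ h₁ (Eventually.of_forall fun x => ?_)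
  · exact (((hV.sub_const μ).max aemeasurable_const).pow_const p).aestronglyMeasurable
  · filter_upwards [self_mem_nhdsWithin] with μ (hμ : μ₁ ≤ μ)
    refine Eventually.of_forall fun x => ?_
    rw [Real.norm_of_nonneg (by positivity)]
    exact Real.rpow_le_rpow (le_max_right _ _) (max_le_max (by linarith) le_rfl) hp.le
  · exact (((continuous_const.sub continuous_id).max continuous_const).rpow_const
      fun _ => Or.inr hp.le).continuousWithinAt

end Integrals

namespace HasTF

variable {Φ : ℝ → ℝ} {lam : ℝ}

lemma continuousOn_effPot (hΦ : HasTF Φ) : ContinuousOn (fun r => Φ r - lam ^ 2 / r ^ 2) (Ioi 0) :=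
  hΦ.1.sub (continuousOn_const.div (continuousOn_pow 2) fun _ hr => pow_ne_zero 2 (ne_of_gt hr))

lemma eventually_nhdsGT_effPot_nonpos (hΦ : HasTF Φ) (hlam : 0 < lam) :
    ∀ᶠ r in 𝓝[>] 0, Φ r - lam ^ 2 / r ^ 2 ≤ 0 := by
  filter_upwards [hΦ.2.2.1.eventually (gt_mem_nhds one_lt_two),
    Ioo_mem_nhdsGT (by positivity : (0:ℝ) < lam ^ 2 / 2)] with r hr2 ⟨hr0, hr⟩
  rw [sub_nonpos, le_div_iff₀ (by positivity)]
  nlinarith [mul_lt_mul_of_pos_right hr2 hr0]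

lemma eventually_atTop_effPot_nonpos (hΦ : HasTF Φ) (hlam : 0 < lam) :
    ∀ᶠ r in atTop, Φ r - lam ^ 2 / r ^ 2 ≤ 0 := by
  obtain ⟨C, -, hC⟩ := hΦ.2.2.2
  filter_upwards [eventually_ge_atTop (max 1 (C / lam ^ 2))] with r hr
  have hr1 : 1 ≤ r := le_of_max_le_left hr
  have hrC : C ≤ lam ^ 2 * r ^ 2 := by
    have : C ≤ lam ^ 2 * r := by
      rw [← div_le_iff₀' (by positivity)]
      exact le_of_max_le_right hr
    nlinarith [mul_le_mul_of_nonneg_left (by nlinarith : r ≤ r ^ 2) (sq_nonneg lam)]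
  have hCr : C / r ^ 4 ≤ lam ^ 2 / r ^ 2 := by
    rw [div_le_div_iff₀ (by positivity) (by positivity)]
    nlinarith [mul_le_mul_of_nonneg_right hrC (sq_nonneg r)]
  linarith [hC r hr1]

lemma exists_effPot_nonpos_of_notMem_Icc (hΦ : HasTF Φ) (hlam : 0 < lam) :
    ∃ δ R, 0 < δ ∧ ∀ r, 0 < r → r ∉ Icc δ R → Φ r - lam ^ 2 / r ^ 2 ≤ 0 := by
  obtain ⟨δ, hδ, hsmall⟩ :=
    (nhdsGT_basis (0:ℝ)).eventually_iff.1 (hΦ.eventually_nhdsGT_effPot_nonpos hlam)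
  obtain ⟨R, hlarge⟩ := eventually_atTop.1 (hΦ.eventually_atTop_effPot_nonpos hlam)
  refine ⟨δ, R, hδ, fun r hr hnot => ?_⟩
  rcases lt_or_ge r δ with hrδ | hδr
  · exact hsmall ⟨hr, hrδ⟩
  · exact hlarge r (le_of_lt (not_le.1 fun hrR => hnot ⟨hδr, hrR⟩))

lemma exists_effPot_le (hΦ : HasTF Φ) (hlam : 0 < lam) :
    ∃ M, 0 ≤ M ∧ ∀ r, 0 < r → Φ r - lam ^ 2 / r ^ 2 ≤ M := by
  obtain ⟨δ, R, hδ, hout⟩ := hΦ.exists_effPot_nonpos_of_notMem_Icc hlam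
  obtain ⟨M, hM⟩ := isCompact_Icc.bddAbove_image
    (hΦ.continuousOn_effPot.mono fun r hr => hδ.trans_le hr.1 : ContinuousOn _ (Icc δ R))
  refine ⟨max M 0, le_max_right _ _, fun r hr => ?_⟩
  by_cases hrI : r ∈ Icc δ R
  · exact (hM ⟨r, hrI, rfl⟩).trans (le_max_left _ _)
  · exact (hout r hr hrI).trans (le_max_right _ _)

lemma integrableOn_posPart_rpow (hΦ : HasTF Φ) (hlam : 0 < lam) {μ p : ℝ} (hμ : 0 ≤ μ)
    (hp : 0 < p) :
    IntegrableOn (fun r => max (Φ r - lam ^ 2 / r ^ 2 - μ) 0 ^ p) (Ioi 0) := by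
  obtain ⟨δ, R, hδ, hout⟩ := hΦ.exists_effPot_nonpos_of_notMem_Icc hlam
  have hcont : ContinuousOn (fun r => max (Φ r - lam ^ 2 / r ^ 2 - μ) 0 ^ p) (Ioi 0) :=
    ((hΦ.continuousOn_effPot.sub continuousOn_const).sup continuousOn_const).rpow_const
      fun _ _ => Or.inr hp.le
  refine ((hcont.mono fun r hr => hδ.trans_le hr.1).integrableOn_Icc).of_forall_sdiff_eq_zero
    measurableSet_Ioi fun r (⟨hr, hnot⟩ : r ∈ Ioi 0 \ Icc δ R) => ?_
  rw [max_eq_right (by linarith [hout r hr hnot]), Real.zero_rpow hp.ne']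

lemma exists_eG_eq_zero (hΦ : HasTF Φ) (hlam : 0 < lam) : ∃ M, 0 ≤ M ∧ eG Φ lam M = 0 := by
  obtain ⟨M, hM, hle⟩ := hΦ.exists_effPot_le hlam
  refine ⟨M, hM, ?_⟩
  rw [eG, setIntegral_eq_zero_of_forall_eq_zero fun r hr => ?_, mul_zero]
  rw [max_eq_right (by linarith [hle r hr]), Real.zero_rpow (by norm_num)]

lemma eG_sub_eG_zero_le (hΦ : HasTF Φ) (hlam : 0 < lam) {μ : ℝ} (hμ : 0 ≤ μ) :
    eG Φ lam μ - eG Φ lam 0 ≤ μ * nSC Φ lam 0 := by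
  have h := integral_posPart_rpow_three_halves_sub_le (V := fun r => Φ r - lam ^ 2 / r ^ 2) hμ
    (hΦ.integrableOn_posPart_rpow hlam le_rfl (by norm_num))
    (hΦ.integrableOn_posPart_rpow hlam hμ (by norm_num))
    (hΦ.integrableOn_posPart_rpow hlam le_rfl (by norm_num))
  unfold eG nSC
  have := pi_pos
  linear_combination (2 / (3 * π)) * h

lemma mul_nSC_le_eG_sub_eG_zero (hΦ : HasTF Φ) (hlam : 0 < lam) {μ : ℝ} (hμ : 0 ≤ μ) :
    μ * nSC Φ lam μ ≤ eG Φ lam μ - eG Φ lam 0 := by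
  have h := mul_integral_posPart_rpow_half_le_sub (V := fun r => Φ r - lam ^ 2 / r ^ 2) hμ
    (hΦ.integrableOn_posPart_rpow hlam le_rfl (by norm_num))
    (hΦ.integrableOn_posPart_rpow hlam hμ (by norm_num))
    (hΦ.integrableOn_posPart_rpow hlam hμ (by norm_num))
  unfold eG nSC
  have := pi_pos
  linear_combination (2 / (3 * π)) * h

lemma continuousWithinAt_nSC (hΦ : HasTF Φ) (hlam : 0 < lam) :
    ContinuousWithinAt (nSC Φ lam) (Ici 0) 0 :=
  (continuousWithinAt_integral_posPart_sub_rpow (V := fun r => Φ r - lam ^ 2 / r ^ 2)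
    (by norm_num) (hΦ.continuousOn_effPot.aemeasurable measurableSet_Ioi)
    (hΦ.integrableOn_posPart_rpow hlam le_rfl (by norm_num))).const_mul (1 / π)

end HasTF

section CanonicalEnergy

variable (Φ : ℝ → ℝ) (lam : ℝ) {n : ℝ}

lemma eG_nonpos (μ : ℝ) : eG Φ lam μ ≤ 0 :=
  mul_nonpos_of_nonpos_of_nonneg (by have := pi_pos; simp only [neg_nonpos]; positivity)
    (setIntegral_nonneg measurableSet_Ioi fun _ _ => by positivity)

lemma le_eCan (hn : 0 ≤ n) {μ : ℝ} (hμ : 0 ≤ μ) : eG Φ lam μ - μ * n ≤ eCan Φ lam n := by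
  refine le_csSup ⟨0, ?_⟩ ⟨μ, hμ, rfl⟩
  rintro _ ⟨ν, hν, rfl⟩
  nlinarith [eG_nonpos Φ lam ν, mul_nonneg hν hn]

lemma eCan_le {c : ℝ} (h : ∀ μ, 0 ≤ μ → eG Φ lam μ - μ * n ≤ c) : eCan Φ lam n ≤ c :=
  csSup_le ⟨_, 0, self_mem_Ici, rfl⟩ (by rintro _ ⟨μ, hμ, rfl⟩; exact h μ hμ)

end CanonicalEnergy

/-- For a Thomas–Fermi potential `Φ` and `λ > 0`, the canonical energy
satisfies `e(λ,n) ≥ e_G(λ,0)` for all `n ≥ 0`, with equality iff `n ≥ n(λ,0)`;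
moreover `e(λ,0) = 0`. -/
theorem eCan_ge_eG_zero (Φ : ℝ → ℝ) (hΦ : HasTF Φ) (lam : ℝ) (hlam : 0 < lam) :
    (∀ n : ℝ, 0 ≤ n → eG Φ lam 0 ≤ eCan Φ lam n) ∧
    (∀ n : ℝ, 0 ≤ n → (eCan Φ lam n = eG Φ lam 0 ↔ nSC Φ lam 0 ≤ n)) ∧
    eCan Φ lam 0 = 0 := by
  have eG_zero_le : ∀ n : ℝ, 0 ≤ n → eG Φ lam 0 ≤ eCan Φ lam n := fun n hn => by
    simpa using le_eCan Φ lam hn le_rfl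
  refine ⟨eG_zero_le, fun n hn => ⟨fun heq => ?_, fun hge => ?_⟩, ?_⟩
  · by_contra! hlt
    have hnear : ∀ᶠ μ in 𝓝[>] 0, n < nSC Φ lam μ :=
      nhdsWithin_mono _ Ioi_subset_Ici_self
        ((hΦ.continuousWithinAt_nSC hlam).eventually (lt_mem_nhds hlt))
    obtain ⟨μ, hnμ, hμ⟩ := (hnear.and self_mem_nhdsWithin).exists
    have hle := le_eCan Φ lam hn (le_of_lt hμ)
    nlinarith [hΦ.mul_nSC_le_eG_sub_eG_zero hlam (le_of_lt hμ), mul_lt_mul_of_pos_left hnμ hμ]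
  · refine le_antisymm (eCan_le Φ lam fun μ hμ => ?_) (eG_zero_le n hn)
    nlinarith [hΦ.eG_sub_eG_zero_le hlam hμ, mul_le_mul_of_nonneg_left hge hμ]
  · obtain ⟨M, hM, hM0⟩ := hΦ.exists_eG_eq_zero hlam
    refine le_antisymm (eCan_le Φ lam fun μ _ => by simpa using eG_nonpos Φ lam μ) ?_
    simpa [hM0] using le_eCan Φ lam le_rfl hM
end

section
/- Let Φ : (0,∞) → ℝ have the Thomas–Fermi potential properties, let λ > 0, and let n be a real number with 0 < n < n(λ,0). Then there exists a unique μ* > 0 such that n(λ,μ*) = n, and the supremum defining the canonical energy e(λ,n) = sup_{μ ≥ 0} (e_G(λ,μ) − μn) is attained at μ = μ*, i.e. e(λ,n) = e_G(λ,μ*) − μ*·n. -/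
open MeasureTheory Real Filter Set

/-!
The effective potential `V = Φ − λ²/r²` is bounded above: near `0` the centrifugal term
`λ²/r²` beats `Φ ~ 1/r`, and `Φ` decays at infinity. Hence `n(λ,·)` is continuous on `[0,∞)` by
dominated convergence, vanishes for `μ ≥ sup V`, and is strictly decreasing while positive, so
the intermediate value theorem gives a unique `μ*` with `n(λ,μ*) = n`. The supporting-line
inequality for the convex function `t ↦ t₊^{3/2}`, whose derivative is `(3/2) t₊^{1/2}`,
integrates to `e_G(λ,μ) − μ n ≤ e_G(λ,μ*) − μ* n` for all `μ ≥ 0`.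
-/

open Topology

section PosPartPow

variable {α : Type*} {V : α → ℝ} {p μ μ₀ μ₁ μ₂ : ℝ}

noncomputable def posPartPow (V : α → ℝ) (p μ : ℝ) (r : α) : ℝ := max (V r - μ) 0 ^ p

lemma posPartPow_nonneg (V : α → ℝ) (p μ : ℝ) (r : α) : 0 ≤ posPartPow V p μ r :=
  rpow_nonneg (le_max_right _ _) _

lemma posPartPow_anti (hp : 0 ≤ p) (h : μ₁ ≤ μ₂) (r : α) :
    posPartPow V p μ₂ r ≤ posPartPow V p μ₁ r :=
  rpow_le_rpow (le_max_right _ _) (max_le_max (by linarith) le_rfl) hp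

lemma posPartPow_eq_zero (hp : p ≠ 0) {r : α} (h : V r ≤ μ) : posPartPow V p μ r = 0 := by
  rw [posPartPow, max_eq_right (sub_nonpos.2 h), zero_rpow hp]

lemma continuous_posPartPow (hp : 0 ≤ p) (r : α) : Continuous fun μ => posPartPow V p μ r :=
  ((continuous_const.sub continuous_id).max continuous_const).rpow_const fun _ => Or.inr hp

variable [MeasurableSpace α] {ν : Measure α}

lemma MeasureTheory.AEStronglyMeasurable.posPartPow (hV : AEStronglyMeasurable V ν)
    (hp : 0 ≤ p) (μ : ℝ) : AEStronglyMeasurable (posPartPow V p μ) ν :=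
  (((continuous_id.sub continuous_const).max continuous_const).rpow_const
    fun _ => Or.inr hp).comp_aestronglyMeasurable hV

lemma MeasureTheory.Integrable.posPartPow_of_le (hV : AEStronglyMeasurable V ν) (hp : 0 ≤ p)
    (h : Integrable (posPartPow V p μ₁) ν) (h12 : μ₁ ≤ μ₂) :
    Integrable (posPartPow V p μ₂) ν :=
  h.mono' (hV.posPartPow hp μ₂) (Eventually.of_forall fun r => by
    rw [norm_of_nonneg (posPartPow_nonneg _ _ _ _)]
    exact posPartPow_anti hp h12 r)

lemma continuousOn_integral_posPartPow (hV : AEStronglyMeasurable V ν) (hp : 0 ≤ p)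
    (h : Integrable (posPartPow V p μ₀) ν) :
    ContinuousOn (fun μ => ∫ r, posPartPow V p μ r ∂ν) (Ici μ₀) :=
  continuousOn_of_dominated (fun μ _ => hV.posPartPow hp μ)
    (fun _ hμ => Eventually.of_forall fun r => by
      rw [norm_of_nonneg (posPartPow_nonneg _ _ _ _)]
      exact posPartPow_anti hp hμ r)
    h (Eventually.of_forall fun r => (continuous_posPartPow hp r).continuousOn)

lemma integral_posPartPow_eq_zero (hp : p ≠ 0) (h : ∀ᵐ r ∂ν, V r ≤ μ) :
    ∫ r, posPartPow V p μ r ∂ν = 0 :=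
  integral_eq_zero_of_ae (h.mono fun _ hr => posPartPow_eq_zero hp hr)

lemma integral_posPartPow_lt_of_lt (hp : 0 < p) (h₁ : Integrable (posPartPow V p μ₁) ν)
    (h₂ : Integrable (posPartPow V p μ₂) ν) (h12 : μ₁ < μ₂)
    (hpos : 0 < ∫ r, posPartPow V p μ₂ r ∂ν) :
    ∫ r, posPartPow V p μ₂ r ∂ν < ∫ r, posPartPow V p μ₁ r ∂ν := by
  have hsupp : Function.support (posPartPow V p μ₂) ⊆
      Function.support (posPartPow V p μ₁ - posPartPow V p μ₂) := by
    intro r hr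
    have hV : μ₂ < V r := not_le.1 fun h => hr (posPartPow_eq_zero hp.ne' h)
    refine (sub_pos.2 (rpow_lt_rpow (le_max_right _ _) ?_ hp)).ne'
    rw [max_eq_left (by linarith), max_eq_left (by linarith)]
    linarith
  rw [integral_pos_iff_support_of_nonneg (posPartPow_nonneg _ _ _) h₂] at hpos
  have hdiff := (integral_pos_iff_support_of_nonneg
    (fun r => sub_nonneg.2 (posPartPow_anti hp.le h12.le r)) (h₁.sub h₂)).2
    (hpos.trans_le (measure_mono hsupp))
  rw [integral_sub h₁ h₂] at hdiff
  linarith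

lemma max_zero_rpow_three_halves_add_le (a b : ℝ) :
    max a 0 ^ (3/2 : ℝ) + 3/2 * (b - a) * max a 0 ^ (1/2 : ℝ) ≤ max b 0 ^ (3/2 : ℝ) := by
  have h32 : ∀ x : ℝ, 0 ≤ x → x ^ (3/2 : ℝ) = √x ^ 3 := fun x hx => by
    rw [sqrt_eq_rpow, ← rpow_mul_natCast hx]; norm_num
  rw [h32 _ (le_max_right _ _), h32 _ (le_max_right _ _), ← sqrt_eq_rpow]
  have hau : a * √(max a 0) = √(max a 0) ^ 3 := by
    rcases le_or_gt a 0 with ha | ha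
    · simp [max_eq_right ha]
    · rw [pow_succ, sq_sqrt (le_max_right _ _), max_eq_left ha.le]
  have hbv : b ≤ √(max b 0) ^ 2 := by rw [sq_sqrt (le_max_right _ _)]; exact le_max_left _ _
  have hu := sqrt_nonneg (max a 0)
  have hv := sqrt_nonneg (max b 0)
  -- with `u = √a₊`, `v = √b₊`: `v³ − u³ − (3/2)(v² − u²)u = (v − u)²(v + u/2)`
  nlinarith [mul_nonneg (sq_nonneg (√(max b 0) - √(max a 0)))
    (by positivity : 0 ≤ √(max b 0) + √(max a 0) / 2), mul_le_mul_of_nonneg_right hbv hu]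

lemma integral_posPartPow_three_halves_add_le
    (hμ : Integrable (posPartPow V (3/2) μ) ν) (hμ₀ : Integrable (posPartPow V (3/2) μ₀) ν)
    (hμ₀' : Integrable (posPartPow V (1/2) μ₀) ν) :
    ∫ r, posPartPow V (3/2) μ₀ r ∂ν + 3/2 * (μ₀ - μ) * ∫ r, posPartPow V (1/2) μ₀ r ∂ν ≤
      ∫ r, posPartPow V (3/2) μ r ∂ν := by
  rw [← integral_const_mul, ← integral_add hμ₀ (hμ₀'.const_mul _)]
  refine integral_mono (hμ₀.add (hμ₀'.const_mul _)) hμ fun r => ?_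
  have := max_zero_rpow_three_halves_add_le (V r - μ₀) (V r - μ)
  rwa [sub_sub_sub_cancel_left] at this

end PosPartPow

lemma exists_forall_le_of_continuousOn_Ioi {f : ℝ → ℝ} {a b : ℝ}
    (hf : ContinuousOn f (Ioi 0)) (h0 : ∀ᶠ r in 𝓝[>] 0, f r ≤ a) (h1 : ∀ r, 1 ≤ r → f r ≤ b) :
    ∃ M, ∀ r, 0 < r → f r ≤ M := by
  obtain ⟨δ, hδ, hδa⟩ := mem_nhdsGT_iff_exists_Ioo_subset.1 h0
  obtain ⟨B, hB⟩ := (isCompact_Icc (a := min δ 1) (b := 1)).bddAbove_image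
    (hf.mono fun r hr => (lt_min hδ one_pos).trans_le hr.1)
  refine ⟨max a (max B b), fun r hr => ?_⟩
  rcases lt_or_ge r (min δ 1) with hδr | hδr
  · exact (hδa ⟨hr, hδr.trans_le (min_le_left _ _)⟩).trans (le_max_left _ _)
  rcases le_or_gt r 1 with hr1 | hr1
  · exact (hB ⟨r, ⟨hδr, hr1⟩, rfl⟩).trans ((le_max_left _ _).trans (le_max_right _ _))
  · exact (h1 r hr1.le).trans ((le_max_right _ _).trans (le_max_right _ _))

noncomputable def effectivePotential (Φ : ℝ → ℝ) (lam r : ℝ) : ℝ :=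
  Φ r - lam ^ 2 / r ^ 2

section ThomasFermi

variable {Φ : ℝ → ℝ} {lam μ μ₀ μ₁ μ₂ : ℝ}

lemma eG_eq_integral_posPartPow : eG Φ lam μ =
    -(2 / (3 * π)) * ∫ r in Ioi 0, posPartPow (effectivePotential Φ lam) (3/2) μ r := rfl

lemma nSC_eq_integral_posPartPow : nSC Φ lam μ =
    (1 / π) * ∫ r in Ioi 0, posPartPow (effectivePotential Φ lam) (1/2) μ r := rfl

namespace HasTF

lemma continuousOn_effectivePotential (hΦ : HasTF Φ) (lam : ℝ) :
    ContinuousOn (effectivePotential Φ lam) (Ioi 0) :=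
  hΦ.1.sub (continuousOn_const.div (continuous_pow 2).continuousOn
    fun _ hr => pow_ne_zero 2 (ne_of_gt hr))

lemma aestronglyMeasurable_effectivePotential (hΦ : HasTF Φ) (lam : ℝ) :
    AEStronglyMeasurable (effectivePotential Φ lam) (volume.restrict (Ioi 0)) :=
  (hΦ.continuousOn_effectivePotential lam).aestronglyMeasurable measurableSet_Ioi

lemma eventually_effectivePotential_nonpos (hΦ : HasTF Φ) (hlam : lam ≠ 0) :
    ∀ᶠ r in 𝓝[>] 0, effectivePotential Φ lam r ≤ 0 := by
  filter_upwards [hΦ.2.2.1.eventually_lt_const one_lt_two,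
    Ioo_mem_nhdsGT (by positivity : (0:ℝ) < lam ^ 2 / 2)] with r hrΦ hr
  rw [effectivePotential, sub_nonpos, le_div_iff₀ (by nlinarith [hr.1])]
  nlinarith [hr.1, hr.2]

lemma exists_effectivePotential_le (hΦ : HasTF Φ) (hlam : lam ≠ 0) :
    ∃ M, ∀ r, 0 < r → effectivePotential Φ lam r ≤ M := by
  obtain ⟨C, hC, hdecay⟩ := hΦ.2.2.2
  refine exists_forall_le_of_continuousOn_Ioi (hΦ.continuousOn_effectivePotential lam)
    (hΦ.eventually_effectivePotential_nonpos hlam) (b := C) fun r hr => ?_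
  calc effectivePotential Φ lam r ≤ Φ r := sub_le_self _ (by positivity)
    _ ≤ C / r ^ 4 := hdecay r hr
    _ ≤ C := div_le_self hC.le (one_le_pow₀ hr)

lemma integrableOn_posPartPow (hΦ : HasTF Φ) (hlam : lam ≠ 0) {p : ℝ} (hp : 1/4 < p)
    (hμ : 0 ≤ μ) : IntegrableOn (posPartPow (effectivePotential Φ lam) p μ) (Ioi 0) := by
  have hp0 : 0 ≤ p := by linarith
  suffices h0 : IntegrableOn (posPartPow (effectivePotential Φ lam) p 0) (Ioi 0) from
    h0.posPartPow_of_le (hΦ.aestronglyMeasurable_effectivePotential lam) hp0 hμ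
  obtain ⟨M, hM⟩ := hΦ.exists_effectivePotential_le hlam
  obtain ⟨C, hC, hdecay⟩ := hΦ.2.2.2
  have hmeas : ∀ s ⊆ Ioi 0, MeasurableSet s →
      AEStronglyMeasurable (posPartPow (effectivePotential Φ lam) p 0) (volume.restrict s) :=
    fun s hs hsm => (((hΦ.continuousOn_effectivePotential lam).mono hs).aestronglyMeasurable
      hsm).posPartPow hp0 0
  rw [← Ioc_union_Ioi_eq_Ioi zero_le_one]
  refine IntegrableOn.union ?_ ?_
  · refine Integrable.mono' (integrableOn_const (C := max M 0 ^ p) measure_Ioc_lt_top.ne)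
      (hmeas _ Ioc_subset_Ioi_self measurableSet_Ioc)
      ((ae_restrict_iff' measurableSet_Ioc).2 (Eventually.of_forall fun r hr => ?_))
    rw [norm_of_nonneg (posPartPow_nonneg _ _ _ _)]
    exact rpow_le_rpow (le_max_right _ _)
      (max_le_max (by simpa using hM r hr.1) le_rfl) hp0
  · refine Integrable.mono'
      ((integrableOn_Ioi_rpow_of_lt (by linarith : -(4 * p) < -1) one_pos).const_mul (C ^ p))
      (hmeas _ (Ioi_subset_Ioi zero_le_one) measurableSet_Ioi)
      ((ae_restrict_iff' measurableSet_Ioi).2 (Eventually.of_forall fun r hr => ?_))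
    have hr0 : (0:ℝ) < r := one_pos.trans hr
    have hV : max (effectivePotential Φ lam r - 0) 0 ≤ C / r ^ 4 :=
      max_le ((sub_zero _).trans_le ((sub_le_self _ (by positivity)).trans (hdecay r hr.le)))
        (by positivity)
    rw [norm_of_nonneg (posPartPow_nonneg _ _ _ _)]
    calc posPartPow (effectivePotential Φ lam) p 0 r ≤ (C / r ^ 4) ^ p :=
          rpow_le_rpow (le_max_right _ _) hV hp0
      _ = C ^ p * r ^ (-(4 * p)) := by
        rw [div_rpow hC.le (by positivity), ← rpow_natCast r 4, ← rpow_mul hr0.le,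
          rpow_neg hr0.le, div_eq_mul_inv]
        norm_num

lemma continuousOn_nSC (hΦ : HasTF Φ) (hlam : lam ≠ 0) : ContinuousOn (nSC Φ lam) (Ici 0) :=
  continuousOn_const.mul (continuousOn_integral_posPartPow
    (hΦ.aestronglyMeasurable_effectivePotential lam) (by norm_num)
    (hΦ.integrableOn_posPartPow hlam (by norm_num) le_rfl))

lemma exists_nSC_eq_zero (hΦ : HasTF Φ) (hlam : lam ≠ 0) :
    ∃ M, 0 ≤ M ∧ nSC Φ lam M = 0 := by
  obtain ⟨M, hM⟩ := hΦ.exists_effectivePotential_le hlam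
  refine ⟨max M 0, le_max_right _ _, ?_⟩
  rw [nSC_eq_integral_posPartPow, integral_posPartPow_eq_zero (by norm_num)
    ((ae_restrict_iff' measurableSet_Ioi).2
      (Eventually.of_forall fun r hr => (hM r hr).trans (le_max_left _ _))), mul_zero]

lemma nSC_lt_nSC (hΦ : HasTF Φ) (hlam : lam ≠ 0) (hμ₁ : 0 ≤ μ₁) (h12 : μ₁ < μ₂)
    (hpos : 0 < nSC Φ lam μ₂) : nSC Φ lam μ₂ < nSC Φ lam μ₁ := by
  rw [nSC_eq_integral_posPartPow] at hpos ⊢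
  have hI {m : ℝ} (hm : 0 ≤ m) :=
    hΦ.integrableOn_posPartPow hlam (p := 1/2) (by norm_num) hm
  exact mul_lt_mul_of_pos_left (integral_posPartPow_lt_of_lt (by norm_num) (hI hμ₁)
    (hI (hμ₁.trans h12.le)) h12 (pos_of_mul_pos_right hpos (by positivity))) (by positivity)

lemma eG_sub_mul_nSC_le (hΦ : HasTF Φ) (hlam : lam ≠ 0) (hμ₀ : 0 ≤ μ₀) (hμ : 0 ≤ μ) :
    eG Φ lam μ - μ * nSC Φ lam μ₀ ≤ eG Φ lam μ₀ - μ₀ * nSC Φ lam μ₀ := by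
  have hI {p m : ℝ} (hp : 1/4 < p) (hm : 0 ≤ m) := hΦ.integrableOn_posPartPow hlam hp hm
  have key := integral_posPartPow_three_halves_add_le (hI (by norm_num) hμ)
    (hI (by norm_num) hμ₀) (hI (by norm_num) hμ₀)
  rw [eG_eq_integral_posPartPow, eG_eq_integral_posPartPow, nSC_eq_integral_posPartPow]
  linear_combination (2 / (3 * π)) * key

end HasTF

end ThomasFermi

/-- For a Thomas–Fermi potential `Φ`, `λ > 0` and `0 < n < n(λ,0)`, there
is a unique `μ* > 0` with `n(λ,μ*) = n`, and the supremum defining `e(λ,n)` is attained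
there: `e(λ,n) = e_G(λ,μ*) − μ*·n`. -/
theorem eCan_attained (Φ : ℝ → ℝ) (hΦ : HasTF Φ) (lam : ℝ) (hlam : 0 < lam)
    (n : ℝ) (hn0 : 0 < n) (hn1 : n < nSC Φ lam 0) :
    ∃ μs : ℝ, 0 < μs ∧ nSC Φ lam μs = n ∧
      (∀ μ : ℝ, 0 < μ → nSC Φ lam μ = n → μ = μs) ∧
      eCan Φ lam n = eG Φ lam μs - μs * n := by
  obtain ⟨M, hM0, hM⟩ := hΦ.exists_nSC_eq_zero hlam.ne'
  obtain ⟨μs, ⟨hμs0, -⟩, hμs⟩ := intermediate_value_Icc' hM0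
    ((hΦ.continuousOn_nSC hlam.ne').mono Icc_subset_Ici_self) ⟨hM ▸ hn0.le, hn1.le⟩
  have hμs_pos : 0 < μs := hμs0.lt_of_ne (by rintro rfl; exact hn1.ne' hμs)
  refine ⟨μs, hμs_pos, hμs, fun μ hμ hμn => ?_, ?_⟩
  · by_contra hne
    rcases lt_or_gt_of_ne hne with h | h
    · exact (hΦ.nSC_lt_nSC hlam.ne' hμ.le h (hμs ▸ hn0)).ne (hμs.trans hμn.symm)
    · exact (hΦ.nSC_lt_nSC hlam.ne' hμs0 h (hμn ▸ hn0)).ne (hμn.trans hμs.symm)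
  · refine IsGreatest.csSup_eq ⟨⟨μs, hμs0, rfl⟩, ?_⟩
    rintro _ ⟨μ, hμ, rfl⟩
    simpa only [hμs] using hΦ.eG_sub_mul_nSC_le hlam.ne' hμs0 hμ
end

section
/- Let Φ : (0,∞) → ℝ have the Thomas–Fermi potential properties. Then for each fixed μ ≥ 0, the functions λ ↦ e_G(λ,μ) and λ ↦ n(λ,μ) are continuous on (0,∞). -/
open MeasureTheory Real Filter Set

open Topology

/-! Dominated convergence in `λ`. Since `r Φ(r) → 1`, we have `r² Φ(r) → 0`, so near a fixed
`λ₀ ≠ 0` the centrifugal term `λ²/r²` exceeds `Φ(r)` on a whole interval `(0, r₀]` and the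
integrands vanish there. On `[r₀, ∞)` they are bounded by `Φ^p`, which is integrable: `Φ` is bounded
on `[r₀, 1]` and `Φ^p ≤ C^p r^{-4p}` beyond, with `4p > 1` for both exponents `p = 1/2, 3/2`. -/
lemma div_pow_four_rpow {C r : ℝ} (hC : 0 ≤ C) (hr : 0 < r) (p : ℝ) :
    (C / r ^ 4) ^ p = C ^ p * r ^ (-(4 * p)) := by
  rw [div_rpow hC (by positivity), ← rpow_natCast, ← rpow_mul hr.le, rpow_neg hr.le,
    div_eq_mul_inv]
  norm_num

lemma eventually_le_sq_div_sq_of_tendsto_mul {Φ : ℝ → ℝ} {L : ℝ}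
    (h : Tendsto (fun r => r * Φ r) (𝓝[>] 0) (𝓝 L)) {a : ℝ} (ha : 0 < a) :
    ∀ᶠ r in 𝓝[>] 0, Φ r ≤ a ^ 2 / r ^ 2 := by
  have hsq : Tendsto (fun r => r * (r * Φ r)) (𝓝[>] 0) (𝓝 (0 * L)) :=
    (tendsto_nhdsWithin_of_tendsto_nhds tendsto_id).mul h
  rw [zero_mul] at hsq
  filter_upwards [hsq.eventually_lt_const (pow_pos ha 2), self_mem_nhdsWithin] with r hr hr0
  rw [le_div_iff₀ (pow_pos hr0 2)]
  linarith

lemma integrableOn_rpow_Ici_of_le_div_pow_four {Φ : ℝ → ℝ} {C p r₀ : ℝ}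
    (hcont : ContinuousOn Φ (Ioi 0)) (hnonneg : ∀ r, 0 < r → 0 ≤ Φ r)
    (hdecay : ∀ r, 1 ≤ r → Φ r ≤ C / r ^ 4) (hp4 : 1 < 4 * p) (hr₀ : 0 < r₀) :
    IntegrableOn (fun r => Φ r ^ p) (Ici r₀) := by
  have hp : 0 ≤ p := by linarith
  have hcont_p : ContinuousOn (fun r => Φ r ^ p) (Ioi 0) :=
    hcont.rpow_const fun _ _ => Or.inr hp
  have hnear : IntegrableOn (fun r => Φ r ^ p) (Icc r₀ 1) :=
    (hcont_p.mono fun r hr => hr₀.trans_le hr.1).integrableOn_compact isCompact_Icc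
  have hfar : IntegrableOn (fun r => Φ r ^ p) (Ioi 1) := by
    have hC : 0 ≤ C := by
      have h1 := (hnonneg 1 one_pos).trans (hdecay 1 le_rfl)
      rwa [one_pow, div_one] at h1
    have hdom : IntegrableOn (fun r : ℝ => C ^ p * r ^ (-(4 * p))) (Ioi 1) :=
      (integrableOn_Ioi_rpow_of_lt (by linarith) one_pos).const_mul _
    have hmeas : AEStronglyMeasurable (fun r => Φ r ^ p) (volume.restrict (Ioi 1)) :=
      (hcont_p.mono (Ioi_subset_Ioi zero_le_one)).aestronglyMeasurable measurableSet_Ioi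
    refine hdom.mono' hmeas ?_
    rw [ae_restrict_iff' measurableSet_Ioi]
    filter_upwards with r (hr : 1 < r)
    have hr0 : 0 < r := one_pos.trans hr
    rw [norm_of_nonneg (rpow_nonneg (hnonneg r hr0) p), ← div_pow_four_rpow hC hr0]
    exact rpow_le_rpow (hnonneg r hr0) (hdecay r hr.le) hp
  refine (hnear.union hfar).mono_set fun r (hr : r₀ ≤ r) => ?_
  rcases le_or_gt r 1 with h | h
  · exact Or.inl ⟨hr, h⟩
  · exact Or.inr h

lemma max_sub_sub_zero_rpow_le {φ s μ p : ℝ} (hφ : 0 ≤ φ) (hs : 0 ≤ s) (hμ : 0 ≤ μ) (hp : 0 ≤ p) :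
    max (φ - s - μ) 0 ^ p ≤ φ ^ p :=
  rpow_le_rpow (le_max_right _ _) (max_le (by linarith) hφ) hp

lemma max_sub_sub_zero_rpow_eq_zero {φ s μ p : ℝ} (hφs : φ ≤ s) (hμ : 0 ≤ μ) (hp : p ≠ 0) :
    max (φ - s - μ) 0 ^ p = 0 := by
  rw [max_eq_right (by linarith), zero_rpow hp]

lemma HasTF.continuousAt_integral_max_rpow {Φ : ℝ → ℝ} (hΦ : HasTF Φ) {μ p lam₀ : ℝ}
    (hμ : 0 ≤ μ) (hp4 : 1 < 4 * p) (hlam₀ : lam₀ ≠ 0) :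
    ContinuousAt (fun lam => ∫ r in Ioi (0:ℝ), max (Φ r - lam ^ 2 / r ^ 2 - μ) 0 ^ p) lam₀ := by
  have hp : 0 < p := by linarith
  obtain ⟨hcont, hpos, hlim, C, -, hdecay⟩ := hΦ
  have ha : 0 < |lam₀| / 2 := half_pos (abs_pos.2 hlam₀)
  obtain ⟨r₀, hr₀, hvanish⟩ :=
    mem_nhdsGT_iff_exists_Ioc_subset.1 (eventually_le_sq_div_sq_of_tendsto_mul hlim ha)
  have hbound_int : Integrable ((Ici r₀).indicator fun r => Φ r ^ p) (volume.restrict (Ioi 0)) :=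
    ((integrable_indicator_iff measurableSet_Ici).2
      (integrableOn_rpow_Ici_of_le_div_pow_four hcont (fun r hr => (hpos r hr).le) hdecay hp4
        hr₀)).restrict
  refine continuousAt_of_dominated (Eventually.of_forall fun lam => ?_) ?_ hbound_int ?_
  · refine ContinuousOn.aestronglyMeasurable ?_ measurableSet_Ioi
    refine ContinuousOn.rpow_const ?_ fun _ _ => Or.inr hp.le
    exact ((hcont.sub (continuousOn_const.div (continuous_pow 2).continuousOn
      fun r hr => pow_ne_zero 2 (ne_of_gt hr))).sub continuousOn_const).sup continuousOn_const
  · filter_upwards [(continuous_abs.tendsto lam₀).eventually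
      (lt_mem_nhds (half_lt_self (abs_pos.2 hlam₀)))] with lam hlam
    have hsq : (|lam₀| / 2) ^ 2 ≤ lam ^ 2 := sq_abs lam ▸ pow_le_pow_left₀ ha.le hlam.le 2
    rw [ae_restrict_iff' measurableSet_Ioi]
    filter_upwards with r (hr : 0 < r)
    rw [norm_of_nonneg (rpow_nonneg (le_max_right _ _) p)]
    rcases le_or_gt r r₀ with hle | hgt
    · rw [max_sub_sub_zero_rpow_eq_zero ((hvanish ⟨hr, hle⟩).trans ?_) hμ hp.ne']
      · exact indicator_nonneg (fun r hr => rpow_nonneg (hpos r (hr₀.trans_le hr)).le p) r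
      · exact div_le_div_of_nonneg_right hsq (sq_nonneg r)
    · rw [indicator_of_mem (show r ∈ Ici r₀ from hgt.le)]
      exact max_sub_sub_zero_rpow_le (hpos r hr).le (by positivity) hμ hp.le
  · exact ae_of_all _ fun r => ContinuousAt.rpow_const (by fun_prop) (Or.inr hp.le)

/-- For a Thomas–Fermi potential `Φ` and fixed `μ ≥ 0`, the maps
`λ ↦ e_G(λ,μ)` and `λ ↦ n(λ,μ)` are continuous on `(0,∞)`. -/
theorem eG_nSC_continuousOn (Φ : ℝ → ℝ) (hΦ : HasTF Φ) (μ : ℝ) (hμ : 0 ≤ μ) :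
    ContinuousOn (fun lam => eG Φ lam μ) (Ioi 0) ∧
    ContinuousOn (fun lam => nSC Φ lam μ) (Ioi 0) := by
  have hint : ∀ p : ℝ, 1 < 4 * p → ContinuousOn
      (fun lam => ∫ r in Ioi (0:ℝ), max (Φ r - lam ^ 2 / r ^ 2 - μ) 0 ^ p) (Ioi 0) :=
    fun p hp4 lam hlam =>
      (hΦ.continuousAt_integral_max_rpow hμ hp4 (ne_of_gt hlam)).continuousWithinAt
  exact ⟨continuousOn_const.mul (hint _ (by norm_num)),
    continuousOn_const.mul (hint _ (by norm_num))⟩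
end

section
/- (Analytic core of the lower-bound lemma.) Let Φ : (0,∞) → ℝ have the Thomas–Fermi potential properties, let λ > 0, and let (χ_k)_{k∈ℕ} be a sequence of non-negative real numbers such that for every μ ≥ 0 and every ε > 0, limsup_{k→∞} ( e_G(λ,μ) − μ·χ_k ) ≤ e_G(λ+ε, 0). Then liminf_{k→∞} χ_k ≥ n(λ,0) = κ(λ). -/
open MeasureTheory Real Filter Set

/-!
Convexity of `t ↦ t₊^{3/2}` gives, pointwise in `r`, the tangent-line bound
`(V r)₊^{3/2} − (V r − μ)₊^{3/2} ≥ (3/2) μ (V r − μ)₊^{1/2}` for `V r = Φ r − λ² r⁻²`; integrated,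
`e_G(λ,μ) ≥ e_G(λ,0) + μ n(λ,μ)`. With the hypothesis this gives, for all `μ, ε > 0`,
`μ · liminf χ_k ≥ μ n(λ,μ) − (e_G(λ+ε,0) − e_G(λ,0))`. Let `ε → 0`, then `μ → 0`: both limits
are dominated convergence, since the integrands decrease in `λ` and `μ`, vanish near `r = 0`
(because `λ > 0` and `r Φ(r) → 1`) and are `O(r^{-4p})` at infinity.
-/

open Topology

lemma rpow_three_halves_eq_sqrt_pow {a : ℝ} (ha : 0 ≤ a) : a ^ ((3:ℝ)/2) = √a ^ 3 := by
  rw [sqrt_eq_rpow, ← rpow_natCast, ← rpow_mul ha]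
  norm_num

lemma mul_rpow_half_le_rpow_three_halves_sub (x : ℝ) {μ : ℝ} (hμ : 0 ≤ μ) :
    3 / 2 * μ * max (x - μ) 0 ^ ((1:ℝ)/2)
      ≤ max x 0 ^ ((3:ℝ)/2) - max (x - μ) 0 ^ ((3:ℝ)/2) := by
  rcases le_total x μ with hxμ | hμx
  · rw [max_eq_right (sub_nonpos.2 hxμ), zero_rpow (by norm_num), zero_rpow (by norm_num)]
    simpa using rpow_nonneg (le_max_right x 0) _
  have hx : 0 ≤ x := hμ.trans hμx
  rw [max_eq_left (sub_nonneg.2 hμx), max_eq_left hx, ← sqrt_eq_rpow,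
    rpow_three_halves_eq_sqrt_pow hx, rpow_three_halves_eq_sqrt_pow (sub_nonneg.2 hμx)]
  have hμ_eq : μ = √x ^ 2 - √(x - μ) ^ 2 := by
    rw [sq_sqrt hx, sq_sqrt (sub_nonneg.2 hμx)]; ring
  have hs := sqrt_nonneg x
  have ht := sqrt_nonneg (x - μ)
  generalize √x = s, √(x - μ) = t at hμ_eq hs ht ⊢
  have hfactor : 0 ≤ (s - t) ^ 2 * (s + t / 2) := by positivity
  subst hμ_eq
  linarith

noncomputable def tfIntegrand (Φ : ℝ → ℝ) (l μ p r : ℝ) : ℝ :=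
  max (Φ r - l ^ 2 / r ^ 2 - μ) 0 ^ p

lemma tfIntegrand_nonneg (Φ : ℝ → ℝ) (l μ p r : ℝ) : 0 ≤ tfIntegrand Φ l μ p r :=
  rpow_nonneg (le_max_right _ _) _

lemma tfIntegrand_le {Φ : ℝ → ℝ} {lam l μ p r : ℝ} (hlam : 0 ≤ lam) (hl : lam ≤ l)
    (hμ : 0 ≤ μ) (hp : 0 ≤ p) :
    tfIntegrand Φ l μ p r ≤ tfIntegrand Φ lam 0 p r := by
  have : lam ^ 2 / r ^ 2 ≤ l ^ 2 / r ^ 2 := by gcongr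
  exact rpow_le_rpow (le_max_right _ _) (max_le_max (by linarith) le_rfl) hp

lemma continuousOn_tfIntegrand {Φ : ℝ → ℝ} (hΦ : ContinuousOn Φ (Ioi 0)) (l μ : ℝ)
    {p : ℝ} (hp : 0 ≤ p) : ContinuousOn (tfIntegrand Φ l μ p) (Ioi 0) := by
  have hsq : ∀ r ∈ Ioi (0:ℝ), r ^ 2 ≠ 0 := fun r hr => pow_ne_zero 2 (ne_of_gt hr)
  unfold tfIntegrand
  fun_prop (disch := assumption)

lemma continuous_tfIntegrand_param (Φ : ℝ → ℝ) (p r : ℝ) (hp : 0 ≤ p) :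
    Continuous fun q : ℝ × ℝ => tfIntegrand Φ q.1 q.2 p r := by
  unfold tfIntegrand
  fun_prop (disch := exact hp)

lemma eventually_le_sq_div_sq {Φ : ℝ → ℝ} {c : ℝ}
    (hΦ : Tendsto (fun r => r * Φ r) (𝓝[>] 0) (𝓝 c)) {lam : ℝ} (hlam : lam ≠ 0) :
    ∀ᶠ r in 𝓝[>] 0, Φ r ≤ lam ^ 2 / r ^ 2 := by
  have hsmall : ∀ᶠ r in 𝓝[>] (0:ℝ), r * (c + 1) < lam ^ 2 :=
    ((continuous_id.mul continuous_const).tendsto' 0 0 (zero_mul _) |>.mono_left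
      nhdsWithin_le_nhds).eventually (gt_mem_nhds (by positivity))
  filter_upwards [hΦ.eventually (gt_mem_nhds (lt_add_one c)), hsmall, self_mem_nhdsWithin]
    with r hbound hr_small (hr : 0 < r)
  rw [le_div_iff₀ (by positivity)]
  nlinarith [mul_lt_mul_of_pos_right hbound hr]

lemma tfIntegrand_eq_zero {Φ : ℝ → ℝ} {l μ p r : ℝ} (hr : Φ r ≤ l ^ 2 / r ^ 2) (hμ : 0 ≤ μ)
    (hp : 0 < p) : tfIntegrand Φ l μ p r = 0 := by
  rw [tfIntegrand, max_eq_right (by linarith), zero_rpow hp.ne']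

lemma tfIntegrand_le_of_le_div_pow {Φ : ℝ → ℝ} {l μ p r C : ℝ} (hr : 0 < r)
    (hC : 0 ≤ C) (hΦr : Φ r ≤ C / r ^ 4) (hμ : 0 ≤ μ) (hp : 0 ≤ p) :
    tfIntegrand Φ l μ p r ≤ C ^ p * r ^ (-(4 * p)) := by
  have hmax : max (Φ r - l ^ 2 / r ^ 2 - μ) 0 ≤ C / r ^ 4 := by
    have : 0 ≤ l ^ 2 / r ^ 2 := by positivity
    exact max_le (by linarith) (by positivity)
  calc tfIntegrand Φ l μ p r ≤ (C / r ^ 4) ^ p := rpow_le_rpow (le_max_right _ _) hmax hp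
    _ = C ^ p * r ^ (-(4 * p)) := by
      rw [div_rpow hC (by positivity), ← rpow_natCast r 4, ← rpow_mul hr.le,
        div_eq_mul_inv, ← rpow_neg hr.le]
      norm_num

lemma integrableOn_tfIntegrand {Φ : ℝ → ℝ} (hΦ : HasTF Φ) {l μ p : ℝ} (hl : 0 < l)
    (hμ : 0 ≤ μ) (hp : 0 < p) (hp4 : 1 < 4 * p) :
    IntegrableOn (tfIntegrand Φ l μ p) (Ioi 0) := by
  obtain ⟨hcont, -, htend, C, hC, htail⟩ := hΦ
  obtain ⟨u, hu, hvan⟩ := (mem_nhdsGT_iff_exists_Ioo_subset.1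
    (eventually_le_sq_div_sq htend hl.ne'))
  have hr0 : 0 < min u 1 := lt_min hu one_pos
  rw [← Ioo_union_Ici_eq_Ioi hr0, ← Icc_union_Ioi_eq_Ici (min_le_right u 1)]
  refine (IntegrableOn.union ?_ (IntegrableOn.union ?_ ?_))
  · refine integrableOn_zero.congr_fun (fun r hr => ?_) measurableSet_Ioo
    exact (tfIntegrand_eq_zero (hvan ⟨hr.1, hr.2.trans_le (min_le_left u 1)⟩) hμ hp).symm
  · exact ((continuousOn_tfIntegrand hcont l μ hp.le).mono
      fun r hr => hr0.trans_le hr.1).integrableOn_compact isCompact_Icc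
  · have hdecay := (integrableOn_Ioi_rpow_of_lt (a := -(4 * p)) (by linarith) one_pos).const_mul
      (C ^ p)
    refine hdecay.mono'
      ((continuousOn_tfIntegrand hcont l μ hp.le).aestronglyMeasurable measurableSet_Ioi
        |>.mono_measure (Measure.restrict_mono (Ioi_subset_Ioi zero_le_one) le_rfl))
      ((ae_restrict_iff' measurableSet_Ioi).2 (Eventually.of_forall fun r (hr : 1 < r) => ?_))
    rw [norm_of_nonneg (tfIntegrand_nonneg ..)]
    exact tfIntegrand_le_of_le_div_pow (one_pos.trans hr) hC.le (htail r hr.le) hμ hp.le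

section

variable {Φ : ℝ → ℝ} (hΦ : HasTF Φ) {lam : ℝ} (hlam : 0 < lam)
include hΦ hlam

lemma eG_add_mul_nSC_le {μ : ℝ} (hμ : 0 ≤ μ) : eG Φ lam 0 + μ * nSC Φ lam μ ≤ eG Φ lam μ := by
  have hhalf := integrableOn_tfIntegrand hΦ hlam hμ (p := 1 / 2) (by norm_num) (by norm_num)
  have hthree := integrableOn_tfIntegrand hΦ hlam hμ (p := 3 / 2) (by norm_num) (by norm_num)
  have hthree₀ :=
    integrableOn_tfIntegrand hΦ hlam le_rfl (p := 3 / 2) (by norm_num) (by norm_num)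
  have hpointwise : ∫ r in Ioi (0:ℝ), 3 / 2 * μ * tfIntegrand Φ lam μ (1 / 2) r
      ≤ ∫ r in Ioi (0:ℝ), tfIntegrand Φ lam 0 (3 / 2) r - tfIntegrand Φ lam μ (3 / 2) r :=
    integral_mono (hhalf.const_mul _) (hthree₀.sub hthree) fun r => by
      simpa [tfIntegrand] using
        mul_rpow_half_le_rpow_three_halves_sub (Φ r - lam ^ 2 / r ^ 2) hμ
  rw [integral_const_mul, integral_sub hthree₀ hthree] at hpointwise
  have := mul_le_mul_of_nonneg_left hpointwise (by positivity : 0 ≤ 2 / (3 * π))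
  simp only [eG, nSC, tfIntegrand] at this ⊢
  field_simp at this ⊢
  linarith

lemma continuousWithinAt_integral_tfIntegrand {p : ℝ} (hp : 0 < p) (hp4 : 1 < 4 * p) :
    ContinuousWithinAt (fun q : ℝ × ℝ => ∫ r in Ioi (0:ℝ), tfIntegrand Φ q.1 q.2 p r)
      (Ici lam ×ˢ Ici 0) (lam, 0) := by
  refine continuousWithinAt_of_dominated
    (Eventually.of_forall fun q => (continuousOn_tfIntegrand hΦ.1 q.1 q.2 hp.le)
      |>.aestronglyMeasurable measurableSet_Ioi)
    (eventually_nhdsWithin_of_forall fun q ⟨(hl : lam ≤ q.1), (hμ : 0 ≤ q.2)⟩ =>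
      Eventually.of_forall fun r => ?_)
    (integrableOn_tfIntegrand hΦ hlam le_rfl hp hp4)
    (Eventually.of_forall fun r =>
      (continuous_tfIntegrand_param Φ p r hp.le).continuousWithinAt)
  rw [norm_of_nonneg (tfIntegrand_nonneg ..)]
  exact tfIntegrand_le hlam.le hl hμ hp.le

lemma tendsto_eG_add_nhdsGT_zero :
    Tendsto (fun ε => eG Φ (lam + ε) 0) (𝓝[>] 0) (𝓝 (eG Φ lam 0)) := by
  have hpath :
      Tendsto (fun ε : ℝ => (lam + ε, (0:ℝ))) (𝓝[>] 0) (𝓝[Ici lam ×ˢ Ici 0] (lam, 0)) := by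
    refine tendsto_nhdsWithin_of_tendsto_nhds_of_eventually_within _ ?_ ?_
    · exact (Continuous.tendsto' (by fun_prop) 0 _ (by simp)).mono_left nhdsWithin_le_nhds
    · filter_upwards [self_mem_nhdsWithin] with ε (hε : 0 < ε)
      exact ⟨by simpa using hε.le, le_refl (0:ℝ)⟩
  exact ((continuousWithinAt_integral_tfIntegrand hΦ hlam (p := 3 / 2) (by norm_num)
    (by norm_num)).tendsto.comp hpath).const_mul _

lemma tendsto_nSC_nhdsGT_zero :
    Tendsto (fun μ => nSC Φ lam μ) (𝓝[>] 0) (𝓝 (nSC Φ lam 0)) := by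
  have hpath : Tendsto (fun μ : ℝ => (lam, μ)) (𝓝[>] 0) (𝓝[Ici lam ×ˢ Ici 0] (lam, 0)) := by
    refine tendsto_nhdsWithin_of_tendsto_nhds_of_eventually_within _ ?_ ?_
    · exact (Continuous.tendsto' (by fun_prop) 0 _ rfl).mono_left nhdsWithin_le_nhds
    · filter_upwards [self_mem_nhdsWithin] with μ (hμ : 0 < μ)
      exact ⟨le_refl lam, hμ.le⟩
  exact ((continuousWithinAt_integral_tfIntegrand hΦ hlam (p := 1 / 2) (by norm_num)
    (by norm_num)).tendsto.comp hpath).const_mul _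

end

lemma le_liminf_of_limsup_sub_mul_lt {χ : ℕ → ℝ} {E μ a : ℝ} (hμ : 0 < μ)
    (h : limsup (fun k => ((E - μ * χ k : ℝ) : EReal)) atTop < ((E - μ * a : ℝ) : EReal)) :
    (a : EReal) ≤ liminf (fun k => (χ k : EReal)) atTop := by
  refine le_liminf_of_le (by isBoundedDefault)
    ((eventually_lt_of_limsup_lt h).mono fun k hk => ?_)
  have : μ * a < μ * χ k := by linarith [EReal.coe_lt_coe_iff.1 hk]
  exact EReal.coe_le_coe_iff.2 (lt_of_mul_lt_mul_left this hμ.le).le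

theorem liminf_ge_kappa_general (Φ : ℝ → ℝ) (hΦ : HasTF Φ) (lam : ℝ) (hlam : 0 < lam)
    (χ : ℕ → ℝ)
    (h : ∀ μ : ℝ, 0 ≤ μ → ∀ ε : ℝ, 0 < ε →
      Filter.limsup (fun k => ((eG Φ lam μ - μ * χ k : ℝ) : EReal)) atTop
        ≤ ((eG Φ (lam + ε) 0 : ℝ) : EReal)) :
    ((nSC Φ lam 0 : ℝ) : EReal) ≤ Filter.liminf (fun k => ((χ k : ℝ) : EReal)) atTop := by
  refine EReal.ge_of_forall_gt_iff_ge.1 fun a ha => ?_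
  obtain ⟨μ, hnμ, hμ : 0 < μ⟩ := ((tendsto_nSC_nhdsGT_zero hΦ hlam).eventually
    (lt_mem_nhds (EReal.coe_lt_coe_iff.1 ha))).and self_mem_nhdsWithin |>.exists
  obtain ⟨ε, hε_close, hε : 0 < ε⟩ := ((tendsto_eG_add_nhdsGT_zero hΦ hlam).eventually
    (gt_mem_nhds (lt_add_of_pos_right (eG Φ lam 0) (mul_pos hμ (sub_pos.2 hnμ))))).and
    self_mem_nhdsWithin |>.exists
  refine le_liminf_of_limsup_sub_mul_lt hμ
    ((h μ hμ.le ε hε).trans_lt (EReal.coe_lt_coe_iff.2 ?_))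
  linarith [eG_add_mul_nSC_le hΦ hlam hμ.le]

/-- analytic core of the lower-bound lemma: if a sequence of non-negative
reals `χ_k` satisfies `limsup_k (e_G(λ,μ) − μχ_k) ≤ e_G(λ+ε,0)` for all `μ ≥ 0` and
`ε > 0`, then `liminf_k χ_k ≥ n(λ,0) = κ(λ)` (liminf taken in `EReal`). -/
theorem liminf_ge_kappa (Φ : ℝ → ℝ) (hΦ : HasTF Φ) (lam : ℝ) (hlam : 0 < lam)
    (χ : ℕ → ℝ) (hχ : ∀ k, 0 ≤ χ k)
    (h : ∀ μ : ℝ, 0 ≤ μ → ∀ ε : ℝ, 0 < ε →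
      Filter.limsup (fun k => ((eG Φ lam μ - μ * χ k : ℝ) : EReal)) atTop
        ≤ ((eG Φ (lam + ε) 0 : ℝ) : EReal)) :
    ((nSC Φ lam 0 : ℝ) : EReal) ≤ Filter.liminf (fun k => ((χ k : ℝ) : EReal)) atTop :=
  liminf_ge_kappa_general Φ hΦ lam hlam χ h
end

section
/- (Madelung starting-number formula.) For all integers ℓ ≥ 0 and n ≥ 1, one has 1 + Σ 2(2ℓ′+1) = (1/6)(n+2ℓ−1)((n+2ℓ)² + 4(n+2ℓ) + 9) − (1/4)(1+(−1)ⁿ)(n+2ℓ+1) + 1 − 2ℓ(ℓ+2), where the sum runs over all orbitals (ν, ℓ′) that strictly precede the orbital (n+ℓ, ℓ) in the Madelung order. In other words, the atomic number at which the orbital with angular momentum ℓ and principal quantum number n+ℓ begins to be filled under the Madelung rule equals the stated explicit expression Z_ℓ(n). -/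
open Finset

/-- The (finite) set of orbitals `(ν', ℓ')` (with `ν' ≥ ℓ' + 1`) strictly preceding the
orbital `o = (ν, ℓ)` in the Madelung order: `ν' + ℓ' < ν + ℓ`, or
`ν' + ℓ' = ν + ℓ` and `ν' < ν`. -/
def madelungPred (o : ℕ × ℕ) : Finset (ℕ × ℕ) :=
  (Finset.range (o.1 + o.2 + 1) ×ˢ Finset.range (o.1 + o.2 + 1)).filter
    (fun p => p.2 + 1 ≤ p.1 ∧
      (p.1 + p.2 < o.1 + o.2 ∨ (p.1 + p.2 = o.1 + o.2 ∧ p.1 < o.1)))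

lemma madelung_gauss (m : ℕ) :
    ∑ b ∈ Finset.range m, (2 * (2 * (b : ℚ) + 1)) = 2 * (m : ℚ) ^ 2 := by
  induction m with
  | zero => simp
  | succ k ih => rw [Finset.sum_range_succ, ih]; push_cast; ring

/-- The extra orbitals gained when going from `(n,0)` to `(n+1,0)`. -/
def madelungDiag (n : ℕ) : Finset (ℕ × ℕ) :=
  (Finset.range (n + 2) ×ˢ Finset.range (n + 2)).filter
    (fun p => (p.2 + 1 ≤ p.1 ∧ p.1 + p.2 = n + 1 ∧ 1 ≤ p.2) ∨ (p.1 = n ∧ p.2 = 0))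

lemma madelungPred_succ (n : ℕ) (hn : 1 ≤ n) :
    madelungPred (n + 1, 0) = madelungPred (n, 0) ∪ madelungDiag n := by
  ext ⟨a, b⟩
  simp only [madelungPred, madelungDiag, Finset.mem_union, Finset.mem_filter,
    Finset.mem_product, Finset.mem_range, Prod.fst, Prod.snd]
  omega

lemma madelungDiag_disjoint (n : ℕ) : Disjoint (madelungPred (n, 0)) (madelungDiag n) := by
  rw [Finset.disjoint_left]
  rintro ⟨a, b⟩ h h'
  simp only [madelungPred, madelungDiag, Finset.mem_filter, Finset.mem_product,
    Finset.mem_range] at h h'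
  omega

lemma madelungDiag_sum (n : ℕ) :
    ∑ p ∈ madelungDiag n, (2 * (2 * (p.2 : ℚ) + 1)) = 2 * ((n / 2 + 1 : ℕ) : ℚ) ^ 2 := by
  rw [← madelung_gauss (n / 2 + 1)]
  refine Finset.sum_nbij' (fun p => p.2) (fun b => if b = 0 then (n, 0) else (n + 1 - b, b))
    ?_ ?_ ?_ ?_ ?_
  · rintro ⟨a, b⟩ h
    simp only [madelungDiag, Finset.mem_filter, Finset.mem_product, Finset.mem_range] at h
    simp only [Finset.mem_range]
    obtain ⟨hr, h | h⟩ := h <;> omega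
  · intro b hb
    simp only [Finset.mem_range] at hb
    simp only [madelungDiag, Finset.mem_filter, Finset.mem_product, Finset.mem_range]
    split_ifs with h
    · subst h; omega
    · simp only []; omega
  · rintro ⟨a, b⟩ h
    simp only [madelungDiag, Finset.mem_filter, Finset.mem_product, Finset.mem_range] at h
    show (if b = 0 then (n, 0) else (n + 1 - b, b)) = (a, b)
    obtain ⟨hr, h | h⟩ := h <;> split_ifs with hb <;> simp only [Prod.mk.injEq, and_true] <;> omega
  · intro b hb
    show ((if b = 0 then (n, 0) else (n + 1 - b, b)) : ℕ × ℕ).2 = b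
    split_ifs with h <;> simp [h]
  · rintro ⟨a, b⟩ h
    simp

lemma madelung_base (n : ℕ) (hn : 1 ≤ n) :
    (1 : ℚ) + ∑ p ∈ madelungPred (n, 0), (2 * (2 * (p.2 : ℚ) + 1))
      = (1/6) * ((n : ℚ) - 1) * ((n : ℚ) ^ 2 + 4 * (n : ℚ) + 9)
        - (1/4) * (1 + (-1) ^ n) * ((n : ℚ) + 1) + 1 := by
  induction n, hn using Nat.le_induction with
  | base =>
    have : madelungPred (1, 0) = ∅ := by decide
    rw [this]
    norm_num
  | succ n hn ih =>
    rw [madelungPred_succ n hn, Finset.sum_union (madelungDiag_disjoint n), madelungDiag_sum]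
    rw [show ((1:ℚ) + (∑ p ∈ madelungPred (n, 0), (2 * (2 * (p.2 : ℚ) + 1))
        + 2 * ((n / 2 + 1 : ℕ) : ℚ) ^ 2))
      = (1 + ∑ p ∈ madelungPred (n, 0), (2 * (2 * (p.2 : ℚ) + 1)))
        + 2 * ((n / 2 + 1 : ℕ) : ℚ) ^ 2 by ring, ih]
    rcases Nat.even_or_odd n with h | h
    · obtain ⟨k, hk⟩ := h
      have h2 : n / 2 = k := by omega
      have hpow : ((-1 : ℚ)) ^ n = 1 := by
        rw [hk]; rw [show k + k = 2 * k by ring, pow_mul]; norm_num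
      have hpow' : ((-1 : ℚ)) ^ (n + 1) = -1 := by rw [pow_succ, hpow]; ring
      rw [h2, hpow, hpow', hk]
      push_cast
      ring
    · obtain ⟨k, hk⟩ := h
      have h2 : n / 2 = k := by omega
      have hpow : ((-1 : ℚ)) ^ n = -1 := by
        rw [hk, pow_succ, show 2 * k = k + k by ring, show ((-1:ℚ))^(k+k) = 1 by
          rw [show k + k = 2 * k by ring, pow_mul]; norm_num]; ring
      have hpow' : ((-1 : ℚ)) ^ (n + 1) = 1 := by rw [pow_succ, hpow]; ring
      rw [h2, hpow, hpow', hk]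
      push_cast
      ring

lemma madelungPred_diag_step (m ℓ : ℕ) (h : ℓ + 2 ≤ m) :
    madelungPred (m + 1, ℓ) = insert (m, ℓ + 1) (madelungPred (m, ℓ + 1)) := by
  ext ⟨a, b⟩
  simp only [madelungPred, Finset.mem_insert, Finset.mem_filter, Finset.mem_product,
    Finset.mem_range, Prod.mk.injEq]
  omega

lemma madelung_self_not_mem (o : ℕ × ℕ) : o ∉ madelungPred o := by
  simp only [madelungPred, Finset.mem_filter, Finset.mem_product, Finset.mem_range]
  omega

/-- Madelung starting-number formula: the atomic number at which the
orbital with angular momentum `ℓ` and principal quantum number `n + ℓ` starts being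
filled under the Madelung rule, namely `1` plus the total capacity `Σ 2(2ℓ'+1)` of all
strictly preceding orbitals, equals the explicit expression `Z_ℓ(n)`. -/
theorem madelung_starting_number (ℓ n : ℕ) (hn : 1 ≤ n) :
    (1 : ℚ) + ∑ p ∈ madelungPred (n + ℓ, ℓ), (2 * (2 * (p.2 : ℚ) + 1))
      = (1/6) * ((n : ℚ) + 2 * ℓ - 1) * (((n : ℚ) + 2 * ℓ) ^ 2 + 4 * ((n : ℚ) + 2 * ℓ) + 9)
        - (1/4) * (1 + (-1) ^ n) * ((n : ℚ) + 2 * ℓ + 1) + 1 - 2 * ℓ * (ℓ + 2) := by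
  induction ℓ generalizing n with
  | zero =>
    have := madelung_base n hn
    simpa using this
  | succ ℓ ih =>
    have IH := ih (n + 2) (by omega)
    rw [show n + 2 + ℓ = (n + ℓ + 1) + 1 by omega,
      madelungPred_diag_step (n + ℓ + 1) ℓ (by omega),
      Finset.sum_insert (madelung_self_not_mem (n + ℓ + 1, ℓ + 1))] at IH
    have hpow : ((-1 : ℚ)) ^ (n + 2) = (-1 : ℚ) ^ n := by
      rw [pow_add]; norm_num
    rw [hpow] at IH
    rw [show n + (ℓ + 1) = n + ℓ + 1 by omega]
    push_cast at IH ⊢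
    linarith [IH]
end
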